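/- arXiv:1512.02510 — 9 statements merged into one kernel-verified Lean document; each statement's English description precedes it below -/
import Mathlib

section
/- Let G be an undirected graph, S a set of edges of G, and X a set of vertices such that G - X contains no cycle through an edge of S. Then the graph obtained from G - X by contracting each connected component of (G - X) - S to a single vertex and keeping only the edges of S is a forest; moreover, between any two connected components of (G - X) - S there is at most one edge of S. -/
/-!
Every `S`-edge of `G - X` is a bridge of `G - X`, since a cycle through it would be an `S`-cycle
avoiding `X`. A cycle of the contracted graph, or a second `S`-edge between the same two bubbles,
lifts through paths inside the bubbles to a walk in `G - X` that joins the ends of an `S`-edge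
without using it.
-/

namespace SimpleGraph

variable {W : Type*}

/-- For `K = H.deleteEdges T`, this is `H` with every component of `K` contracted to a vertex. -/
def contractComponents (K : SimpleGraph W) (T : Set (Sym2 W)) :
    SimpleGraph K.ConnectedComponent :=
  fromRel fun C D => ∃ a b, K.connectedComponentMk a = C ∧ K.connectedComponentMk b = D ∧
    s(a, b) ∈ T

lemma exists_of_contractComponents_adj {K : SimpleGraph W} {T : Set (Sym2 W)}
    {C D : K.ConnectedComponent} (h : (K.contractComponents T).Adj C D) :
    ∃ a b, K.connectedComponentMk a = C ∧ K.connectedComponentMk b = D ∧ s(a, b) ∈ T := by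
  rcases h.2 with h | ⟨a, b, ha, hb, hab⟩
  · exact h
  · exact ⟨b, a, hb, ha, Sym2.eq_swap ▸ hab⟩

lemma reachable_of_reachable_connectedComponent {H K : SimpleGraph W} (hKH : K ≤ H)
    {B : SimpleGraph K.ConnectedComponent}
    (hB : ∀ ⦃C D⦄, B.Adj C D →
      ∃ a b, K.connectedComponentMk a = C ∧ K.connectedComponentMk b = D ∧ H.Adj a b)
    {a b : W} (h : B.Reachable (K.connectedComponentMk a) (K.connectedComponentMk b)) :
    H.Reachable a b := by
  obtain ⟨p⟩ := h
  suffices ∀ {C D} (p : B.Walk C D) (a b : W), K.connectedComponentMk a = C →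
      K.connectedComponentMk b = D → H.Reachable a b from this p a b rfl rfl
  intro C D p
  induction p with
  | nil => exact fun a b ha hb => (ConnectedComponent.exact (ha.trans hb.symm)).mono hKH
  | cons hCD _ ih =>
    rintro a b rfl rfl
    obtain ⟨a', b', ha', rfl, hab'⟩ := hB hCD
    exact ((ConnectedComponent.exact ha'.symm).mono hKH).trans
      (hab'.reachable.trans (ih b' b rfl rfl))

section Bridges

variable {H K : SimpleGraph W} {T : Set (Sym2 W)}

lemma le_deleteEdges_singleton (hK : K ≤ H.deleteEdges T) {e : Sym2 W} (he : e ∈ T) :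
    K ≤ H.deleteEdges {e} :=
  hK.trans (deleteEdges_anti (Set.singleton_subset_iff.mpr he))

theorem eq_of_mem_of_connectedComponentMk_eq (hTH : T ⊆ H.edgeSet)
    (hT : ∀ e ∈ T, H.IsBridge e) (hK : K ≤ H.deleteEdges T) {a b a' b' : W}
    (hab : s(a, b) ∈ T) (ha'b' : s(a', b') ∈ T)
    (ha : K.connectedComponentMk a = K.connectedComponentMk a')
    (hb : K.connectedComponentMk b = K.connectedComponentMk b') : s(a, b) = s(a', b') := by
  by_contra hne
  have hK' := le_deleteEdges_singleton hK hab
  have hadj : (H.deleteEdges {s(a, b)}).Adj a' b' :=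
    deleteEdges_adj.mpr ⟨hTH ha'b', fun h => hne (Set.mem_singleton_iff.mp h).symm⟩
  exact hT _ hab <| ((ConnectedComponent.exact ha).mono hK').trans
    (hadj.reachable.trans ((ConnectedComponent.exact hb.symm).mono hK'))

theorem isAcyclic_contractComponents (hTH : T ⊆ H.edgeSet) (hT : ∀ e ∈ T, H.IsBridge e)
    (hK : K ≤ H.deleteEdges T) : (K.contractComponents T).IsAcyclic := by
  refine isAcyclic_iff_forall_adj_isBridge.mpr fun C D hCD hreach => ?_
  obtain ⟨a, b, rfl, rfl, hab⟩ := exists_of_contractComponents_adj hCD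
  refine hT _ hab <| reachable_of_reachable_connectedComponent
    (le_deleteEdges_singleton hK hab) (fun C' D' h => ?_) hreach
  obtain ⟨hC'D', hne⟩ := deleteEdges_adj.mp h
  obtain ⟨a', b', rfl, rfl, ha'b'⟩ := exists_of_contractComponents_adj hC'D'
  refine ⟨a', b', rfl, rfl, deleteEdges_adj.mpr ⟨hTH ha'b', fun h' => hne ?_⟩⟩
  rw [Set.mem_singleton_iff] at h' ⊢
  simpa using congrArg (Sym2.map K.connectedComponentMk) h'

end Bridges

end SimpleGraph

open SimpleGraph

lemma isBridge_induce_of_mem {V : Type*} {G : SimpleGraph V} {S : Set (Sym2 V)} {X : Set V}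
    (hX : ∀ (v : V) (c : G.Walk v v), c.IsCycle → (∃ e ∈ c.edges, e ∈ S) →
      ∃ x ∈ X, x ∈ c.support)
    {e : Sym2 {v // v ∉ X}} (he : e ∈ (G.induce {v | v ∉ X}).edgeSet)
    (heS : e.map Subtype.val ∈ S) : (G.induce {v | v ∉ X}).IsBridge e := by
  rw [isBridge_iff_forall_cycle_notMem he]
  intro u c hc hec
  let f := Embedding.induce (G := G) {v | v ∉ X}
  obtain ⟨x, hxX, hx⟩ := hX _ (c.map f.toHom) (hc.map f.injective)
    ⟨_, (Walk.edges_map _ _).symm ▸ List.mem_map_of_mem hec, heS⟩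
  rw [Walk.support_map] at hx
  obtain ⟨y, -, rfl⟩ := List.mem_map.mp hx
  exact y.2 hxX

theorem stmt0_general {V : Type} (G : SimpleGraph V)
    (S : Set (Sym2 V)) (hS : S ⊆ G.edgeSet) (X : Set V)
    (hX : ∀ (v : V) (c : G.Walk v v), c.IsCycle → (∃ e ∈ c.edges, e ∈ S) →
      ∃ x ∈ X, x ∈ c.support) :
    letI H := (G.deleteEdges S).induce {v : V | v ∉ X}
    letI cc := H.connectedComponentMk
    letI B : SimpleGraph H.ConnectedComponent := SimpleGraph.fromRel
      (fun C D => ∃ u v : {v : V // v ∉ X}, cc u = C ∧ cc v = D ∧ s(u.1, v.1) ∈ S)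
    B.IsAcyclic ∧
      ∀ C D : H.ConnectedComponent, C ≠ D →
        ∀ u v u' v' : {v : V // v ∉ X},
          cc u = C → cc v = D → cc u' = C → cc v' = D →
          s(u.1, v.1) ∈ S → s(u'.1, v'.1) ∈ S → s(u.1, v.1) = s(u'.1, v'.1) := by
  set T : Set (Sym2 {v : V // v ∉ X}) := Sym2.map Subtype.val ⁻¹' S
  have hTH : T ⊆ (G.induce {v | v ∉ X}).edgeSet := by
    rintro ⟨a, b⟩ hab
    exact hS hab
  have hK : (G.deleteEdges S).induce {v | v ∉ X} ≤ (G.induce {v | v ∉ X}).deleteEdges T := by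
    intro a b h
    simpa [T] using h
  have hT : ∀ e ∈ T, (G.induce {v | v ∉ X}).IsBridge e := fun e he =>
    isBridge_induce_of_mem hX (hTH he) he
  refine ⟨isAcyclic_contractComponents hTH hT hK,
    fun C D _ u v u' v' hu hv hu' hv' huv hu'v' => ?_⟩
  simpa using congrArg (Sym2.map Subtype.val) <|
    eq_of_mem_of_connectedComponentMk_eq hTH hT hK huv hu'v' (hu.trans hu'.symm)
      (hv.trans hv'.symm)

/-- If `G - X` has no `S`-cycle, then the graph obtained from `G - X` by contracting each
connected component of `(G - X) - S` (each "bubble") to a single vertex, keeping only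
the edges of `S`, is a forest; moreover between any two bubbles there is at most one
edge of `S`. -/
theorem stmt0 {V : Type} [Fintype V] [DecidableEq V] (G : SimpleGraph V)
    (S : Set (Sym2 V)) (hS : S ⊆ G.edgeSet) (X : Set V)
    (hX : ∀ (v : V) (c : G.Walk v v), c.IsCycle → (∃ e ∈ c.edges, e ∈ S) →
      ∃ x ∈ X, x ∈ c.support) :
    letI H := (G.deleteEdges S).induce {v : V | v ∉ X}
    letI cc := H.connectedComponentMk
    letI B : SimpleGraph H.ConnectedComponent := SimpleGraph.fromRel
      (fun C D => ∃ u v : {v : V // v ∉ X}, cc u = C ∧ cc v = D ∧ s(u.1, v.1) ∈ S)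
    B.IsAcyclic ∧
      ∀ C D : H.ConnectedComponent, C ≠ D →
        ∀ u v u' v' : {v : V // v ∉ X},
          cc u = C → cc v = D → cc u' = C → cc v' = D →
          s(u.1, v.1) ∈ S → s(u'.1, v'.1) ∈ S → s(u.1, v.1) = s(u'.1, v'.1) :=
  stmt0_general G S hS X hX
end

section
/- Let G be an undirected graph, S a set of edges, and X a vertex set of minimum size intersecting all S-cycles that, among minimum-size such sets, contains a maximum number of endpoints of edges in S (a dominant solution). Then every nonempty set Y ⊆ X \ V(S) sees at least |Y| + 2 connected components of G - X - S that contain an endpoint of an edge of S, where Y sees a component K if some vertex of Y is adjacent in G to a vertex of K. -/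
/-!
Because `X` meets every `S`-cycle, every `S`-edge of `G - X` is a bridge of `G - X`; contracting
the components of `G - X - S` leaves a forest, so any `k` of these components can be pairwise
separated by deleting at most `k - 1` edges of `S`. If `Y` saw at most `|Y| + 1` interesting
components, put one endpoint of each of these at most `|Y|` edges into a set `Z`. Then
`(X \ Y) ∪ Z` is still a solution: an `S`-cycle avoiding it passes through `Y`, and between two
consecutive visits of `Y` it runs inside `G - X` along a trail through an `S`-edge, avoiding the
deleted edges, from one interesting component seen by `Y` to another one, which is different
because the `S`-edge is a bridge. This solution is no larger than `X` but contains more vertices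
of `V(S)`, contradicting dominance.
-/

open Finset

theorem Set.ncard_sdiff_union_eq_and_ncard_inter_lt {α : Type*} [Finite α] {X Y Z T : Set α}
    (hY : Y ⊆ X \ T) (hZT : Z ⊆ T) (hZX : Disjoint Z X) (hZY : Z.ncard ≤ Y.ncard)
    (hYne : Y.Nonempty) (hX : X.ncard ≤ ((X \ Y) ∪ Z).ncard) :
    ((X \ Y) ∪ Z).ncard = X.ncard ∧ (X ∩ T).ncard < (((X \ Y) ∪ Z) ∩ T).ncard := by
  have hYX : Y ⊆ X := fun y hy => (hY hy).1
  have hcard : ((X \ Y) ∪ Z).ncard = X.ncard - Y.ncard + Z.ncard := by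
    rw [Set.ncard_union_eq (hZX.symm.mono_left Set.sdiff_subset), Set.ncard_sdiff hYX]
  have hT : ((X \ Y) ∪ Z) ∩ T = (X ∩ T) ∪ Z := by
    ext x
    have := @hY x
    have := @hZT x
    simp only [Set.mem_inter_iff, Set.mem_union, Set.mem_sdiff] at *
    tauto
  rw [hT, Set.ncard_union_eq (hZX.symm.mono_left Set.inter_subset_left)]
  have := (Set.ncard_pos (Set.toFinite Y)).2 hYne
  have := Set.ncard_le_ncard hYX
  omega

namespace SimpleGraph

variable {W : Type*} {B F : SimpleGraph W}

theorem Walk.IsTrail.exists_not_reachable_deleteEdges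
    (hbr : ∀ e ∈ F.edgeSet \ B.edgeSet, F.IsBridge e) {a b : W} {p : F.Walk a b}
    (hp : p.IsTrail) (hpB : ∃ e ∈ p.edges, e ∉ B.edgeSet) :
    ∃ e ∈ p.edges, e ∉ B.edgeSet ∧ ¬ (F.deleteEdges {e}).Reachable a b := by
  induction p with
  | nil => simp at hpB
  | @cons a x b h q ih =>
    rw [Walk.isTrail_cons] at hp
    by_cases hax : s(a, x) ∈ B.edgeSet
    · obtain ⟨e, heq, heB, hsep⟩ := ih hp.1 (by simpa [hax] using hpB)
      have hadj : (F.deleteEdges {e}).Adj a x := by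
        rw [deleteEdges_adj, Set.mem_singleton_iff]
        exact ⟨h, fun hae => heB (hae ▸ hax)⟩
      exact ⟨e, by simp [heq], heB, fun hab => hsep (hadj.reachable.symm.trans hab)⟩
    · have hbridge : F.IsBridge s(a, x) := hbr _ ⟨h, hax⟩
      have hxb : (F.deleteEdges {s(a, x)}).Reachable x b :=
        ⟨q.toDeleteEdges _ fun e he hmem => hp.2 (Set.mem_singleton_iff.1 hmem ▸ he)⟩
      exact ⟨s(a, x), by simp, hax, fun hab => hbridge (hab.trans hxb.symm)⟩

theorem le_deleteEdges (hBF : B ≤ F) {s : Set (Sym2 W)} (hs : Disjoint B.edgeSet s) :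
    B ≤ F.deleteEdges s :=
  (deleteEdges_eq_self.2 hs).ge.trans (deleteEdges_mono hBF)

theorem Walk.IsTrail.not_reachable_of_isBridge (hBF : B ≤ F)
    (hbr : ∀ e ∈ F.edgeSet \ B.edgeSet, F.IsBridge e) {a b : W} {p : F.Walk a b}
    (hp : p.IsTrail) (hpB : ∃ e ∈ p.edges, e ∉ B.edgeSet) : ¬ B.Reachable a b := by
  obtain ⟨e, -, heB, hsep⟩ := hp.exists_not_reachable_deleteEdges hbr hpB
  exact fun hab => hsep (hab.mono (le_deleteEdges hBF (Set.disjoint_singleton_right.2 heB)))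

theorem Reachable.exists_not_reachable_deleteEdges
    (hbr : ∀ e ∈ F.edgeSet \ B.edgeSet, F.IsBridge e) {a b : W} (hF : F.Reachable a b)
    (hB : ¬ B.Reachable a b) :
    ∃ e ∈ F.edgeSet \ B.edgeSet, ¬ (F.deleteEdges {e}).Reachable a b := by
  classical
  obtain ⟨p⟩ := hF
  have hpB : ∃ e ∈ p.toPath.1.edges, e ∉ B.edgeSet := by
    by_contra! hpB
    exact hB ⟨p.toPath.1.transfer B hpB⟩
  obtain ⟨e, he, heB, hsep⟩ := p.toPath.2.isTrail.exists_not_reachable_deleteEdges hbr hpB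
  exact ⟨e, ⟨Walk.edges_subset_edgeSet _ he, heB⟩, hsep⟩

theorem deleteEdges_insert_le {e : Sym2 W} {s t : Set (Sym2 W)} (h : t ⊆ s) :
    F.deleteEdges (insert e s) ≤ (F.deleteEdges {e}).deleteEdges t := by
  rw [deleteEdges_deleteEdges, Set.singleton_union]
  exact deleteEdges_anti (Set.insert_subset_insert h)

theorem exists_separating_edges_of_isBridge (hBF : B ≤ F)
    (hbr : ∀ e ∈ F.edgeSet \ B.edgeSet, F.IsBridge e) (𝒦 : Finset B.ConnectedComponent) :
    ∃ E : Finset (Sym2 W), ↑E ⊆ F.edgeSet \ B.edgeSet ∧ #E ≤ #𝒦 - 1 ∧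
      ∀ u v, B.connectedComponentMk u ∈ 𝒦 → B.connectedComponentMk v ∈ 𝒦 →
        (F.deleteEdges E).Reachable u v → B.Reachable u v := by
  classical
  induction h : #𝒦 using Nat.strong_induction_on generalizing F 𝒦 with
  | _ n ih =>
  by_cases hgood : ∀ u v, B.connectedComponentMk u ∈ 𝒦 → B.connectedComponentMk v ∈ 𝒦 →
      F.Reachable u v → B.Reachable u v
  · exact ⟨∅, by simp, by simp, by simpa [deleteEdges_empty] using hgood⟩
  push Not at hgood
  obtain ⟨a, b, ha, hb, hFab, hBab⟩ := hgood
  obtain ⟨e, he, hsep⟩ := hFab.exists_not_reachable_deleteEdges hbr hBab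
  set F' := F.deleteEdges {e}
  have hBF' : B ≤ F' := le_deleteEdges hBF (Set.disjoint_singleton_right.2 he.2)
  have hbr' : ∀ e' ∈ F'.edgeSet \ B.edgeSet, F'.IsBridge e' := fun e' he' =>
    (hbr e' ⟨edgeSet_mono (deleteEdges_le _) he'.1, he'.2⟩).anti (deleteEdges_le _)
  -- Deleting the bridge `e` splits `𝒦` into the components on `a`'s side and the others.
  set 𝒦₁ := 𝒦.filter fun K => K.map (Hom.ofLE hBF') = F'.connectedComponentMk a
  set 𝒦₂ := 𝒦.filter fun K => ¬ K.map (Hom.ofLE hBF') = F'.connectedComponentMk a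
  have hmem₁ : ∀ u, B.connectedComponentMk u ∈ 𝒦₁ ↔
      B.connectedComponentMk u ∈ 𝒦 ∧ F'.Reachable u a := by
    simp [𝒦₁, ConnectedComponent.map_mk, ConnectedComponent.eq]
  have hmem₂ : ∀ u, B.connectedComponentMk u ∈ 𝒦₂ ↔
      B.connectedComponentMk u ∈ 𝒦 ∧ ¬ F'.Reachable u a := by
    simp [𝒦₂, ConnectedComponent.map_mk, ConnectedComponent.eq]
  have hcard : #𝒦₁ + #𝒦₂ = n := h ▸ card_filter_add_card_filter_not _
  have hpos₁ : 0 < #𝒦₁ := card_pos.2 ⟨_, (hmem₁ a).2 ⟨ha, .rfl⟩⟩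
  have hpos₂ : 0 < #𝒦₂ := card_pos.2 ⟨_, (hmem₂ b).2 ⟨hb, fun hba => hsep hba.symm⟩⟩
  obtain ⟨E₁, hE₁, hcard₁, hsep₁⟩ := ih _ (by omega) hBF' hbr' 𝒦₁ rfl
  obtain ⟨E₂, hE₂, hcard₂, hsep₂⟩ := ih _ (by omega) hBF' hbr' 𝒦₂ rfl
  have hE'F : F'.edgeSet \ B.edgeSet ⊆ F.edgeSet \ B.edgeSet :=
    Set.sdiff_subset_sdiff_left (edgeSet_mono (deleteEdges_le _))
  refine ⟨insert e (E₁ ∪ E₂), ?_, ?_, ?_⟩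
  · simp only [coe_insert, coe_union]
    exact Set.insert_subset he (Set.union_subset (hE₁.trans hE'F) (hE₂.trans hE'F))
  · have := card_insert_le e (E₁ ∪ E₂)
    have := card_union_le E₁ E₂
    omega
  · intro u v hu hv huv
    rw [coe_insert, coe_union] at huv
    have huv' : F'.Reachable u v :=
      huv.mono (deleteEdges_anti (Set.singleton_subset_iff.2 (Set.mem_insert _ _)))
    by_cases hua : F'.Reachable u a
    · exact hsep₁ u v ((hmem₁ u).2 ⟨hu, hua⟩) ((hmem₁ v).2 ⟨hv, huv'.symm.trans hua⟩)
        (huv.mono (deleteEdges_insert_le Set.subset_union_left))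
    · exact hsep₂ u v ((hmem₂ u).2 ⟨hu, hua⟩) ((hmem₂ v).2 ⟨hv, fun hva => hua (huv'.trans hva)⟩)
        (huv.mono (deleteEdges_insert_le Set.subset_union_right))

theorem Walk.exists_reachable_endpoint_of_notMem_edgeSet {u v : W} (p : F.Walk u v)
    (hpB : ∃ e ∈ p.edges, e ∉ B.edgeSet) :
    ∃ e ∈ p.edges, e ∉ B.edgeSet ∧ ∃ c ∈ e, B.Reachable u c := by
  induction p with
  | nil => simp at hpB
  | @cons u x v h q ih =>
    by_cases hux : s(u, x) ∈ B.edgeSet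
    · obtain ⟨e, he, heB, c, hc, hxc⟩ := ih (by simpa [hux] using hpB)
      exact ⟨e, by simp [he], heB, c, hc, (B.mem_edgeSet.1 hux).reachable.trans hxc⟩
    · exact ⟨s(u, x), by simp, hux, u, Sym2.mem_mk_left _ _, .rfl⟩

section Segment

variable {V : Type*} {G : SimpleGraph V} {Y : Set V}

theorem Walk.exists_eq_append_cons_of_notMem_of_mem {a b : V} (p : G.Walk a b) (ha : a ∉ Y)
    (hb : b ∈ Y) : ∃ (u y : V) (P : G.Walk a u) (h : G.Adj u y) (q : G.Walk y b),
      p = P.append (cons h q) ∧ y ∈ Y ∧ ∀ v ∈ P.support, v ∉ Y := by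
  induction p with
  | nil => exact absurd hb ha
  | @cons a x b h q ih =>
    by_cases hx : x ∈ Y
    · exact ⟨a, x, nil, h, q, rfl, hx, by simpa using ha⟩
    · obtain ⟨u, y, P, h', q', rfl, hy, hP⟩ := ih hx hb
      exact ⟨u, y, cons h P, h', q', rfl, hy, by simpa [ha] using hP⟩

theorem Walk.IsTrail.exists_isTrail_segment {S : Set (Sym2 V)} (hSY : ∀ e ∈ S, ∀ v ∈ e, v ∉ Y)
    {a b : V} {p : G.Walk a b} (hp : p.IsTrail) (ha : a ∈ Y) (hb : b ∈ Y)
    (hpS : ∃ e ∈ p.edges, e ∈ S) :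
    ∃ (u u' : V) (P : G.Walk u u'), P.IsTrail ∧ (∃ e ∈ P.edges, e ∈ S) ∧
      (∃ y ∈ Y, G.Adj y u) ∧ (∃ y ∈ Y, G.Adj y u') ∧ ∀ v ∈ P.support, v ∈ p.support ∧ v ∉ Y := by
  match p, hp, hpS with
  | .nil, _, hpS => simp at hpS
  | .cons (v := x) h q, hp, hpS =>
    rw [isTrail_cons] at hp
    have hqS : ∃ e ∈ q.edges, e ∈ S := by
      obtain ⟨e, he, heS⟩ := hpS
      rcases List.mem_cons.1 he with rfl | he
      · exact absurd ha (hSY _ heS a (Sym2.mem_mk_left _ _))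
      · exact ⟨e, he, heS⟩
    by_cases hx : x ∈ Y
    · obtain ⟨u, u', P, hP, hPS, hu, hu', hPq⟩ := hp.1.exists_isTrail_segment hSY hx hb hqS
      exact ⟨u, u', P, hP, hPS, hu, hu', fun v hv => ⟨by simp [(hPq v hv).1], (hPq v hv).2⟩⟩
    obtain ⟨u, y, P, h', r, rfl, hy, hPY⟩ := q.exists_eq_append_cons_of_notMem_of_mem hx hb
    by_cases hPS : ∃ e ∈ P.edges, e ∈ S
    · exact ⟨x, u, P, hp.1.of_append_left, hPS, ⟨a, ha, h⟩, ⟨y, hy, h'.symm⟩,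
        fun v hv => ⟨by simp [hv], hPY v hv⟩⟩
    have hrS : ∃ e ∈ r.edges, e ∈ S := by
      obtain ⟨e, he, heS⟩ := hqS
      simp only [edges_append, edges_cons, List.mem_append, List.mem_cons] at he
      rcases he with he | rfl | he
      · exact absurd ⟨e, he, heS⟩ hPS
      · exact absurd hy (hSY _ heS y (Sym2.mem_mk_right _ _))
      · exact ⟨e, he, heS⟩
    obtain ⟨w, w', P', hP', hP'S, hw, hw', hP'r⟩ :=
      hp.1.of_append_right.of_cons.exists_isTrail_segment hSY hy hb hrS
    exact ⟨w, w', P', hP', hP'S, hw, hw', fun v hv => ⟨by simp [(hP'r v hv).1], (hP'r v hv).2⟩⟩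
termination_by p.length
decreasing_by all_goals subst_vars; simp +arith

end Segment


section Induce

variable {V : Type*} {G : SimpleGraph V} {s : Set V}

theorem Walk.map_edges_induce {u v : V} (w : G.Walk u v) (hw : ∀ x ∈ w.support, x ∈ s) :
    (w.induce s hw).edges.map (Sym2.map Subtype.val) = w.edges := by
  have := congrArg Walk.edges (w.map_induce hw)
  rwa [Walk.edges_map] at this

theorem Walk.isTrail_induce_iff {u v : V} (w : G.Walk u v) (hw : ∀ x ∈ w.support, x ∈ s) :
    (w.induce s hw).IsTrail ↔ w.IsTrail := by
  rw [← Walk.isTrail_map_iff_of_injective (f := (Embedding.induce (G := G) s).toHom)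
    Subtype.val_injective, w.map_induce hw]
  exact .rfl

end Induce

section SubsetFVS

variable {V : Type*} {G : SimpleGraph V} {S : Set (Sym2 V)} {X Y : Set V}

def IsSubsetFVS (G : SimpleGraph V) (S : Set (Sym2 V)) (X : Set V) : Prop :=
  ∀ (v : V) (c : G.Walk v v), c.IsCycle → (∃ e ∈ c.edges, e ∈ S) → ∃ x ∈ X, x ∈ c.support

theorem notMem_edgeSet_induce_deleteEdges_iff {s : Set V} {e : Sym2 s}
    (he : e ∈ (G.induce s).edgeSet) :
    e ∉ ((G.deleteEdges S).induce s).edgeSet ↔ e.map Subtype.val ∈ S := by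
  induction e using Sym2.ind
  simp_all

theorem induce_deleteEdges_le (s : Set V) : (G.deleteEdges S).induce s ≤ G.induce s :=
  fun _ _ h => deleteEdges_le S h

theorem IsSubsetFVS.isBridge (hX : IsSubsetFVS G S X) :
    ∀ e ∈ (G.induce {v | v ∉ X}).edgeSet \ ((G.deleteEdges S).induce {v | v ∉ X}).edgeSet,
      (G.induce {v | v ∉ X}).IsBridge e := by
  rintro e ⟨he, heS⟩
  rw [isBridge_iff_forall_cycle_notMem he]
  intro u c hc hec
  have hc' := (Walk.isCycle_map_iff_of_injective
    (f := (Embedding.induce (G := G) {v | v ∉ X}).toHom) Subtype.val_injective).2 hc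
  obtain ⟨x, hxX, hx⟩ := hX _ _ hc'
    ⟨e.map Subtype.val, by rw [Walk.edges_map]; exact List.mem_map.2 ⟨e, hec, rfl⟩,
      (notMem_edgeSet_induce_deleteEdges_iff he).1 heS⟩
  rw [Walk.support_map] at hx
  obtain ⟨w, -, rfl⟩ := List.mem_map.1 hx
  exact w.2 hxX

def seenInterestingComponents (G : SimpleGraph V) (S : Set (Sym2 V)) (X Y : Set V) :
    Set ((G.deleteEdges S).induce {v | v ∉ X}).ConnectedComponent :=
  {C | (∃ u : {v : V // v ∉ X},
      ((G.deleteEdges S).induce {v | v ∉ X}).connectedComponentMk u = C ∧ ∃ e ∈ S, u.1 ∈ e) ∧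
    (∃ y ∈ Y, ∃ u : {v : V // v ∉ X},
      ((G.deleteEdges S).induce {v | v ∉ X}).connectedComponentMk u = C ∧ G.Adj y u.1)}

theorem connectedComponentMk_mem_seenInterestingComponents {u v : {v : V // v ∉ X}}
    (p : (G.induce {v | v ∉ X}).Walk u v)
    (hpS : ∃ e ∈ p.edges, e ∉ ((G.deleteEdges S).induce {v | v ∉ X}).edgeSet)
    (hu : ∃ y ∈ Y, G.Adj y u) :
    ((G.deleteEdges S).induce {v | v ∉ X}).connectedComponentMk u ∈
      seenInterestingComponents G S X Y := by
  obtain ⟨e, he, heS, c, hc, huc⟩ := p.exists_reachable_endpoint_of_notMem_edgeSet hpS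
  obtain ⟨y, hy, hyu⟩ := hu
  exact ⟨⟨c, (ConnectedComponent.sound huc).symm, _,
      (notMem_edgeSet_induce_deleteEdges_iff (p.edges_subset_edgeSet he)).1 heS,
      Sym2.mem_map.2 ⟨c, hc, rfl⟩⟩, y, hy, u, rfl, hyu⟩

theorem IsSubsetFVS.sdiff_union (hX : IsSubsetFVS G S X) (hYS : ∀ e ∈ S, ∀ v ∈ e, v ∉ Y)
    {E : Set (Sym2 ({v | v ∉ X} : Set V))} {Z : Set V} (hEZ : ∀ e ∈ E, ∃ z ∈ e, z.1 ∈ Z)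
    (hE : ∀ u u', ((G.deleteEdges S).induce {v | v ∉ X}).connectedComponentMk u ∈
        seenInterestingComponents G S X Y →
      ((G.deleteEdges S).induce {v | v ∉ X}).connectedComponentMk u' ∈
        seenInterestingComponents G S X Y →
      ((G.induce {v | v ∉ X}).deleteEdges E).Reachable u u' →
      ((G.deleteEdges S).induce {v | v ∉ X}).Reachable u u') :
    IsSubsetFVS G S ((X \ Y) ∪ Z) := by
  classical
  intro v c hc hcS
  by_contra! hno
  obtain ⟨x, hxX, hxc⟩ := hX v c hc hcS
  have hxY : x ∈ Y := by_contra fun hxY => hno x (Or.inl ⟨hxX, hxY⟩) hxc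
  obtain ⟨u, u', P, hP, hPS, hu, hu', hPc⟩ := (hc.isTrail.rotate hxc).exists_isTrail_segment hYS
    hxY hxY (by simpa [(c.rotate_edges x hxc).mem_iff] using hcS)
  have hPc' : ∀ w ∈ P.support, w ∈ c.support ∧ w ∉ Y := fun w hw =>
    ⟨(c.mem_support_rotate_iff x hxc).1 (hPc w hw).1, (hPc w hw).2⟩
  have hPX : ∀ w ∈ P.support, w ∈ {v | v ∉ X} := fun w hw hwX =>
    hno w (Or.inl ⟨hwX, (hPc' w hw).2⟩) (hPc' w hw).1
  set P₀ := P.induce _ hPX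
  have hP₀ : P₀.IsTrail := (Walk.isTrail_induce_iff P hPX).2 hP
  have hP₀S : ∃ e ∈ P₀.edges, e ∉ ((G.deleteEdges S).induce {v | v ∉ X}).edgeSet := by
    obtain ⟨e, he, heS⟩ := hPS
    obtain ⟨e₀, he₀, rfl⟩ := List.mem_map.1 ((Walk.map_edges_induce P hPX).symm ▸ he)
    exact ⟨e₀, he₀, (notMem_edgeSet_induce_deleteEdges_iff (P₀.edges_subset_edgeSet he₀)).2 heS⟩
  have hP₀E : ∀ e ∈ P₀.edges, e ∉ E := by
    intro e he heE
    obtain ⟨z, hz, hzZ⟩ := hEZ e heE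
    have hzP : z.1 ∈ P.support := by
      simpa [P₀, Walk.support_induce] using Walk.mem_support_of_mem_edges he hz
    exact hno z.1 (Or.inr hzZ) (hPc' _ hzP).1
  have hsep := hP₀.not_reachable_of_isBridge (induce_deleteEdges_le _) hX.isBridge hP₀S
  exact hsep (hE _ _ (connectedComponentMk_mem_seenInterestingComponents P₀ hP₀S hu)
    (connectedComponentMk_mem_seenInterestingComponents P₀.reverse (by simpa using hP₀S) hu')
    ⟨P₀.toDeleteEdges E hP₀E⟩)

end SubsetFVS

end SimpleGraph

open SimpleGraph

theorem stmt1_general {V : Type} [Fintype V] (G : SimpleGraph V)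
    (S : Set (Sym2 V)) (X : Set V)
    -- X is a solution:
    (hsol : ∀ (v : V) (c : G.Walk v v), c.IsCycle → (∃ e ∈ c.edges, e ∈ S) →
      ∃ x ∈ X, x ∈ c.support)
    -- X has minimum size among solutions:
    (hmin : ∀ X' : Set V,
      (∀ (v : V) (c : G.Walk v v), c.IsCycle → (∃ e ∈ c.edges, e ∈ S) →
        ∃ x ∈ X', x ∈ c.support) → X.ncard ≤ X'.ncard)
    -- among minimum-size solutions, X contains a maximum number of vertices of T = V(S):
    (hdom : ∀ X' : Set V,
      (∀ (v : V) (c : G.Walk v v), c.IsCycle → (∃ e ∈ c.edges, e ∈ S) →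
        ∃ x ∈ X', x ∈ c.support) → X'.ncard = X.ncard →
      (X' ∩ {v : V | ∃ e ∈ S, v ∈ e}).ncard ≤ (X ∩ {v : V | ∃ e ∈ S, v ∈ e}).ncard) :
    letI H := (G.deleteEdges S).induce {v : V | v ∉ X}
    letI cc := H.connectedComponentMk
    ∀ Y : Set V, Y ⊆ X \ {v : V | ∃ e ∈ S, v ∈ e} → Y.Nonempty →
      Y.ncard + 2 ≤
        {C : H.ConnectedComponent |
          (∃ u : {v : V // v ∉ X}, cc u = C ∧ ∃ e ∈ S, u.1 ∈ e) ∧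
          (∃ y ∈ Y, ∃ u : {v : V // v ∉ X}, cc u = C ∧ G.Adj y u.1)}.ncard := by
  intro Y hY hYne
  have hX : IsSubsetFVS G S X := hsol
  by_contra! hlt
  have hfin := (seenInterestingComponents G S X Y).toFinite
  obtain ⟨E, hEsub, hEcard, hEsep⟩ :=
    exists_separating_edges_of_isBridge (induce_deleteEdges_le _) hX.isBridge hfin.toFinset
  set Z : Set V := (fun e : Sym2 ({v | v ∉ X} : Set V) => e.out.1.1) '' ↑E
  have hZ : ∀ z ∈ Z, z ∉ X ∧ ∃ e ∈ S, z ∈ e := by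
    rintro _ ⟨e, he, rfl⟩
    exact ⟨e.out.1.2, _, (notMem_edgeSet_induce_deleteEdges_iff (hEsub he).1).1 (hEsub he).2,
      Sym2.mem_map.2 ⟨_, Sym2.out_fst_mem e, rfl⟩⟩
  have hX' : IsSubsetFVS G S ((X \ Y) ∪ Z) :=
    hX.sdiff_union (fun e he v hv hvY => (hY hvY).2 ⟨e, he, hv⟩)
      (fun e he => ⟨e.out.1, Sym2.out_fst_mem e, Set.mem_image_of_mem _ he⟩)
      (fun u u' hu hu' => hEsep u u' (by simpa) (by simpa))
  have hZY : Z.ncard ≤ Y.ncard := by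
    have : Z.ncard ≤ #E := (Set.ncard_image_le E.finite_toSet).trans (Set.ncard_coe_finset E).le
    have := Set.ncard_eq_toFinset_card _ hfin
    change (seenInterestingComponents G S X Y).ncard < Y.ncard + 2 at hlt
    omega
  obtain ⟨hcard, hlt'⟩ := Set.ncard_sdiff_union_eq_and_ncard_inter_lt hY (fun z hz => (hZ z hz).2)
    (Set.disjoint_left.2 fun z hz => (hZ z hz).1) hZY hYne (hmin _ hX')
  exact (hdom _ hX' hcard).not_gt hlt'

/-- Every nonempty set `Y ⊆ X \ V(S)` of a dominant solution `X` sees at least `|Y| + 2`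
interesting components of `G - X - S` (components containing an endpoint of an `S`-edge),
where `Y` sees a component if some vertex of `Y` has a `G`-neighbor in it. -/
theorem stmt1 {V : Type} [Fintype V] [DecidableEq V] (G : SimpleGraph V)
    (S : Set (Sym2 V)) (hS : S ⊆ G.edgeSet) (X : Set V)
    -- X is a solution:
    (hsol : ∀ (v : V) (c : G.Walk v v), c.IsCycle → (∃ e ∈ c.edges, e ∈ S) →
      ∃ x ∈ X, x ∈ c.support)
    -- X has minimum size among solutions:
    (hmin : ∀ X' : Set V,
      (∀ (v : V) (c : G.Walk v v), c.IsCycle → (∃ e ∈ c.edges, e ∈ S) →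
        ∃ x ∈ X', x ∈ c.support) → X.ncard ≤ X'.ncard)
    -- among minimum-size solutions, X contains a maximum number of vertices of T = V(S):
    (hdom : ∀ X' : Set V,
      (∀ (v : V) (c : G.Walk v v), c.IsCycle → (∃ e ∈ c.edges, e ∈ S) →
        ∃ x ∈ X', x ∈ c.support) → X'.ncard = X.ncard →
      (X' ∩ {v : V | ∃ e ∈ S, v ∈ e}).ncard ≤ (X ∩ {v : V | ∃ e ∈ S, v ∈ e}).ncard) :
    letI H := (G.deleteEdges S).induce {v : V | v ∉ X}
    letI cc := H.connectedComponentMk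
    ∀ Y : Set V, Y ⊆ X \ {v : V | ∃ e ∈ S, v ∈ e} → Y.Nonempty →
      Y.ncard + 2 ≤
        {C : H.ConnectedComponent |
          (∃ u : {v : V // v ∉ X}, cc u = C ∧ ∃ e ∈ S, u.1 ∈ e) ∧
          (∃ y ∈ Y, ∃ u : {v : V // v ∉ X}, cc u = C ∧ G.Adj y u.1)}.ncard :=
  stmt1_general G S X hsol hmin hdom
end

section
/- Let M = M1 ⊕ M2 be the direct sum of two matroids represented over a field F by matrices A1 (with r1 rows) and A2 (with r2 rows). Let T = {I1, ..., It} be a collection of 3-element independent sets of M, each containing exactly 2 elements from the ground set of M1 and exactly 1 element from the ground set of M2. If t > C(r1, 2) · C(r2, 1), then there exists some Il ∈ T such that for every independent set B of M of size at most r1 + r2 - 3: if some Ii ∈ T extends B, then some Ij ∈ T \ {Il} extends B. (Here A extends B means A ∩ B = ∅ and A ∪ B is independent.) -/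
/-!
Let `w i = (A1 (a i) ∧ A1 (b i)) ⊗ A2 (c i)` in `⋀² F^r1 ⊗ ⋀¹ F^r2`, a space of dimension
`C(r1,2) · C(r2,1) < t`; so some `w l` lies in the span of the other `w j`.
For an independent `B`, let `q` be the quotient map by the span of `φ '' B`. Then `I i` extends `B`
exactly when the wedge of the `q ∘ φ`-images of the three elements of `I i` is nonzero, and this
wedge is the image of `w i` under a linear map depending only on `B`. A linear map that does not
kill `w l` cannot kill all the other `w j`.
-/

open Function Set Submodule TensorProduct

theorem exists_mem_span_image_diff_of_not_linearIndependent {K M ι : Type*} [DivisionRing K]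
    [AddCommMonoid M] [Module K M] {w : ι → M} (hw : ¬LinearIndependent K w) :
    ∃ l, w l ∈ span K (w '' (univ \ {l})) := by
  -- Assuming only `AddCommMonoid` keeps the lemma usable on tensor products of submodules, where
  -- matching two `AddCommGroup` instance paths is prohibitively slow.
  let := Module.addCommMonoidToAddCommGroup K (M := M)
  exact not_forall_not.1 fun h => hw (linearIndependent_iff_notMem_span.2 h)

theorem exists_ne_apply_ne_zero_of_mem_span {R M N ι : Type*} [Semiring R] [AddCommMonoid M]
    [Module R M] [AddCommMonoid N] [Module R N] {w : ι → M} {l : ι}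
    (hl : w l ∈ span R (w '' (univ \ {l}))) (ψ : M →ₗ[R] N) (h : ∃ i, ψ (w i) ≠ 0) :
    ∃ j, j ≠ l ∧ ψ (w j) ≠ 0 := by
  obtain ⟨i, hi⟩ := h
  by_cases hil : i = l
  swap
  · exact ⟨i, hil, hi⟩
  by_contra! hzero
  refine hi (hil ▸ (span_le (p := LinearMap.ker ψ)).2 ?_ hl)
  rintro _ ⟨j, hj, rfl⟩
  exact hzero j (by simpa using hj)

theorem ExteriorAlgebra.ιMulti_ne_zero_iff {K E : Type*} [Field K] [AddCommGroup E] [Module K E]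
    {n : ℕ} (v : Fin n → E) : ιMulti K n v ≠ 0 ↔ LinearIndependent K v := by
  refine ⟨fun h => by_contra fun hv => h ((ιMulti K n).map_linearDependent v hv), fun hv => ?_⟩
  have := (exteriorPower.ιMulti_family_linearIndependent_field n hv).ne_zero
    (Set.powersetCard.ofFinEmbEquiv (OrderIso.refl (Fin n)).toOrderEmbedding)
  simpa [exteriorPower.ιMulti_family, ← exteriorPower.ιMulti_apply_coe] using this

theorem disjoint_and_linearIndepOn_union_iff {K V ι : Type*} [Ring K] [Nontrivial K]
    [AddCommGroup V] [Module K V] {f : ι → V} {s : Set ι} (hs : LinearIndepOn K f s)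
    {n : ℕ} {g : Fin n → ι} (hg : Injective g) :
    Disjoint (range g) s ∧ LinearIndepOn K f (range g ∪ s) ↔
      LinearIndependent K ((span K (f '' s)).mkQ ∘ f ∘ g) := by
  rw [← comp_assoc, ← linearIndepOn_range_iff hg]
  refine ⟨fun ⟨hd, h⟩ => ?_, fun h => ⟨?_, union_comm s _ ▸ hs.union_of_quotient h⟩⟩
  · rw [union_comm] at h
    exact ((linearIndepOn_union_iff_quotient hd.symm).1 h).2
  · refine Set.disjoint_left.2 fun x hxg hxs => h.zero_notMem_image ⟨x, hxg, ?_⟩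
    simpa using subset_span (mem_image_of_mem f hxs)

section WedgeTensorMap

variable (K : Type*) {V₁ V₂ E : Type*} [CommRing K] [AddCommGroup V₁] [Module K V₁]
  [AddCommGroup V₂] [Module K V₂] [AddCommGroup E] [Module K E]

noncomputable def wedgeTensorMap (m n : ℕ) (f₁ : V₁ →ₗ[K] E) (f₂ : V₂ →ₗ[K] E) :
    ⋀[K]^m V₁ ⊗[K] ⋀[K]^n V₂ →ₗ[K] ExteriorAlgebra K E :=
  TensorProduct.lift <| (LinearMap.mul K (ExteriorAlgebra K E)).compl₁₂
    ((⋀[K]^m E).subtype ∘ₗ exteriorPower.map m f₁) ((⋀[K]^n E).subtype ∘ₗ exteriorPower.map n f₂)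

variable {K}

theorem wedgeTensorMap_tmul_ιMulti {m n : ℕ} (f₁ : V₁ →ₗ[K] E) (f₂ : V₂ →ₗ[K] E)
    (x : Fin m → V₁) (y : Fin n → V₂) :
    wedgeTensorMap K m n f₁ f₂ (exteriorPower.ιMulti K m x ⊗ₜ exteriorPower.ιMulti K n y) =
      ExteriorAlgebra.ιMulti K (m + n) (Fin.append (f₁ ∘ x) (f₂ ∘ y)) := by
  simp [wedgeTensorMap, ExteriorAlgebra.ιMulti_mul_ιMulti]

end WedgeTensorMap

theorem disjoint_and_linearIndepOn_union_iff_wedgeTensorMap_ne_zero {K U₁ U₂ V₁ V₂ : Type*}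
    [Field K] [AddCommGroup V₁] [Module K V₁] [AddCommGroup V₂] [Module K V₂]
    {A₁ : U₁ → V₁} {A₂ : U₂ → V₂} {φ : U₁ ⊕ U₂ → V₁ × V₂}
    (hφ₁ : ∀ u, φ (.inl u) = (A₁ u, 0)) (hφ₂ : ∀ u, φ (.inr u) = (0, A₂ u))
    {B : Set (U₁ ⊕ U₂)} (hB : LinearIndepOn K φ B) {a b : U₁} (hab : a ≠ b) (c : U₂) :
    let q := (span K (φ '' B)).mkQ
    Disjoint {.inl a, .inl b, .inr c} B ∧ LinearIndepOn K φ ({.inl a, .inl b, .inr c} ∪ B) ↔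
      wedgeTensorMap K 2 1 (q ∘ₗ LinearMap.inl K V₁ V₂) (q ∘ₗ LinearMap.inr K V₁ V₂)
        (exteriorPower.ιMulti K 2 ![A₁ a, A₁ b] ⊗ₜ exteriorPower.ιMulti K 1 ![A₂ c]) ≠ 0 := by
  intro q
  let g : Fin 3 → U₁ ⊕ U₂ := ![.inl a, .inl b, .inr c]
  have hg : Injective g := by
    intro i j
    fin_cases i <;> fin_cases j <;> simp [g, hab, hab.symm]
  have hrange : range g = {.inl a, .inl b, .inr c} := by
    simp only [g, Matrix.range_cons, Matrix.range_empty, union_empty, singleton_union]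
  have happend : Fin.append (⇑(q ∘ₗ LinearMap.inl K V₁ V₂) ∘ ![A₁ a, A₁ b])
      (⇑(q ∘ₗ LinearMap.inr K V₁ V₂) ∘ ![A₂ c]) = q ∘ φ ∘ g := by
    funext i
    fin_cases i <;> simp [g, hφ₁, hφ₂] <;> rfl
  rw [← hrange, wedgeTensorMap_tmul_ιMulti, happend, ExteriorAlgebra.ιMulti_ne_zero_iff]
  exact disjoint_and_linearIndepOn_union_iff hB hg

theorem stmt5_general {F : Type} [Field F] {U1 U2 : Type} (r1 r2 : ℕ)
    (A1 : U1 → (Fin r1 → F)) (A2 : U2 → (Fin r2 → F)) (t : ℕ)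
    -- the representation of M = M1 ⊕ M2 by diag(A1, A2):
    (φ : U1 ⊕ U2 → (Fin r1 → F) × (Fin r2 → F))
    (hφ1 : ∀ u : U1, φ (Sum.inl u) = (A1 u, 0))
    (hφ2 : ∀ u : U2, φ (Sum.inr u) = (0, A2 u))
    -- independence in M:
    (Indep : Set (U1 ⊕ U2) → Prop)
    (hIndep : ∀ X : Set (U1 ⊕ U2),
      Indep X ↔ LinearIndependent F (fun x : X => φ x.1))
    -- the collection of t independent 3-sets, two elements from U1 and one from U2:
    (a b : Fin t → U1) (c : Fin t → U2) (hab : ∀ i, a i ≠ b i)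
    (I : Fin t → Set (U1 ⊕ U2))
    (hI : ∀ i, I i = {Sum.inl (a i), Sum.inl (b i), Sum.inr (c i)})
    (ht : Nat.choose r1 2 * Nat.choose r2 1 < t) :
    ∃ l : Fin t, ∀ B : Set (U1 ⊕ U2), Indep B → B.ncard ≤ r1 + r2 - 3 →
      (∃ i, Disjoint (I i) B ∧ Indep (I i ∪ B)) →
      (∃ j, j ≠ l ∧ Disjoint (I j) B ∧ Indep (I j ∪ B)) := by
  let w : Fin t → ⋀[F]^2 (Fin r1 → F) ⊗[F] ⋀[F]^1 (Fin r2 → F) := fun i =>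
    exteriorPower.ιMulti F 2 ![A1 (a i), A1 (b i)] ⊗ₜ exteriorPower.ιMulti F 1 ![A2 (c i)]
  have hw : ¬LinearIndependent F w := fun h => by
    have := h.fintype_card_le_finrank
    rw [Module.finrank_tensorProduct, exteriorPower.finrank_eq, exteriorPower.finrank_eq,
      Module.finrank_fin_fun, Module.finrank_fin_fun, Fintype.card_fin] at this
    exact lt_irrefl _ (ht.trans_le this)
  obtain ⟨l, hl⟩ := exists_mem_span_image_diff_of_not_linearIndependent hw
  have hIndepOn : ∀ X, Indep X ↔ LinearIndepOn F φ X := hIndep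
  refine ⟨l, fun B hB _ hext => ?_⟩
  simp only [hIndepOn, hI, disjoint_and_linearIndepOn_union_iff_wedgeTensorMap_ne_zero hφ1 hφ2
    ((hIndepOn B).1 hB) (hab _)] at hext ⊢
  exact exists_ne_apply_ne_zero_of_mem_span hl _ hext

/-- Representative sets in a direct sum `M = M1 ⊕ M2` of linearly represented matroids
(`A1` with `r1` rows, `A2` with `r2` rows): given `t > C(r1,2)·C(r2,1)` independent
3-sets, each with two elements from the ground set of `M1` and one from `M2`, one of
them (`I l`) can be dropped: any independent `B` with `|B| ≤ r1 + r2 - 3` extended by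
some member of the collection is extended by some member other than `I l`. -/
theorem stmt5 {F : Type} [Field F] {U1 U2 : Type} (r1 r2 : ℕ)
    (A1 : U1 → (Fin r1 → F)) (A2 : U2 → (Fin r2 → F)) (t : ℕ)
    -- the representation of M = M1 ⊕ M2 by diag(A1, A2):
    (φ : U1 ⊕ U2 → (Fin r1 → F) × (Fin r2 → F))
    (hφ1 : ∀ u : U1, φ (Sum.inl u) = (A1 u, 0))
    (hφ2 : ∀ u : U2, φ (Sum.inr u) = (0, A2 u))
    -- independence in M:
    (Indep : Set (U1 ⊕ U2) → Prop)
    (hIndep : ∀ X : Set (U1 ⊕ U2),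
      Indep X ↔ LinearIndependent F (fun x : X => φ x.1))
    -- the collection of t independent 3-sets, two elements from U1 and one from U2:
    (a b : Fin t → U1) (c : Fin t → U2) (hab : ∀ i, a i ≠ b i)
    (I : Fin t → Set (U1 ⊕ U2))
    (hI : ∀ i, I i = {Sum.inl (a i), Sum.inl (b i), Sum.inr (c i)})
    (hIindep : ∀ i, Indep (I i))
    (hIinj : Function.Injective I)
    (ht : Nat.choose r1 2 * Nat.choose r2 1 < t) :
    ∃ l : Fin t, ∀ B : Set (U1 ⊕ U2), Indep B → B.ncard ≤ r1 + r2 - 3 →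
      (∃ i, Disjoint (I i) B ∧ Indep (I i ∪ B)) →
      (∃ j, j ≠ l ∧ Disjoint (I j) B ∧ Indep (I j ∪ B)) :=
  stmt5_general r1 r2 A1 A2 t φ hφ1 hφ2 Indep hIndep a b c hab I hI ht
end

section
/- Let G be an undirected graph, S ⊆ E(G), and z a vertex of G such that no edge of S is incident with z and no two edges of S share an endpoint. Then G has a z-flower of order t (t S-cycles through z, pairwise vertex-disjoint apart from z) if and only if there exists a set T of 2t endpoints of edges of S that can be partitioned into t edges of S and such that T is linked to N(z) in G - z by 2t vertex-disjoint paths. -/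
/-!
Deleting `z` from an `S`-cycle through `z` leaves a path; since the `S`-edge `xy` on it avoids
`z`, cutting that path at `xy` yields two disjoint paths in `G - z` from neighbours of `z` to `x`
and to `y`. Conversely, two such paths, joined by `xy` and closed up by the two edges at `z`,
form an `S`-cycle through `z`. Petals of a flower meet only in `z`, so the `2t` paths they give
are pairwise disjoint, and disjoint paths give petals meeting only in `z`.
-/

namespace SimpleGraph.Walk
variable {V : Type*} {G : SimpleGraph V}

lemma exists_eq_append_cons_of_mem_darts {u v : V} {c : G.Walk u v} {d : G.Dart}
    (hd : d ∈ c.darts) :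
    ∃ (q : G.Walk u d.fst) (r : G.Walk d.snd v), c = q.append (cons d.adj r) := by
  obtain ⟨q, r, rfl⟩ := (isSubwalk_toWalk_adj_iff_mem_darts c).2 hd
  exact ⟨q, r, by rw [← append_assoc]; rfl⟩

lemma IsPath.append_cons {u v w x : V} {p : G.Walk u v} {q : G.Walk w x} (hp : p.IsPath)
    (hq : q.IsPath) (hpq : p.support.Disjoint q.support) (h : G.Adj v w) :
    (p.append (cons h q)).IsPath := by
  rw [isPath_def, support_append, support_cons, List.tail_cons, List.nodup_append]
  exact ⟨hp.support_nodup, hq.support_nodup, fun a ha b hb hab => hpq ha (hab ▸ hb)⟩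

lemma IsPath.isCycle_cons_concat {z u v : V} {p : G.Walk u v} (hp : p.IsPath)
    (hz : z ∉ p.support) (huv : u ≠ v) (hu : G.Adj z u) (hv : G.Adj v z) :
    (cons hu (p.concat hv)).IsCycle := by
  refine (cons_isCycle_iff _ hu).2 ⟨hp.concat hz hv, fun he => ?_⟩
  rw [edges_concat, List.concat_eq_append, List.mem_append, List.mem_singleton] at he
  rcases he with he | he
  · exact hz (p.fst_mem_support_of_mem_edges he)
  · rcases Sym2.eq_iff.1 he with ⟨h, -⟩ | ⟨-, h⟩
    · exact hz (h ▸ p.end_mem_support)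
    · exact huv h

lemma IsPath.exists_tail_induce {z x : V} {p : G.Walk z x} (hp : p.IsPath) (hx : x ≠ z) :
    ∃ (a : {v // v ≠ z}) (q : (G.induce {v | v ≠ z}).Walk a ⟨x, hx⟩),
      G.Adj z a ∧ q.IsPath ∧ ∀ u ∈ q.support, u.1 ∈ p.support.tail := by
  cases p with
  | nil => exact absurd rfl hx
  | @cons _ a _ hza p =>
    obtain ⟨hp, hzp⟩ := (cons_isPath_iff _ _).1 hp
    have hp_ne : ∀ v ∈ p.support, v ∈ {v | v ≠ z} := fun v hv hvz => hzp (hvz ▸ hv)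
    refine ⟨_, p.induce _ hp_ne, hza, ?_, fun u hu => ?_⟩
    · rw [← p.map_induce hp_ne] at hp
      exact hp.of_map
    · simpa using hu

lemma IsCycle.exists_paths_to_edge {z : V} {c : G.Walk z z} (hc : c.IsCycle) {e : Sym2 V}
    (he : e ∈ c.edges) (hze : z ∉ e) :
    ∃ (b a : Fin 2 → {v // v ≠ z}) (P : ∀ j, (G.induce {v | v ≠ z}).Walk (a j) (b j)),
      s((b 0).1, (b 1).1) = e ∧ (∀ j, G.Adj z (a j)) ∧ (∀ j, (P j).IsPath) ∧
      (P 0).support.Disjoint (P 1).support ∧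
      ∀ j, ∀ u ∈ (P j).support, u.1 ∈ c.support := by
  obtain ⟨d, hd, rfl⟩ := List.mem_map.1 he
  obtain ⟨q, r, rfl⟩ := exists_eq_append_cons_of_mem_darts hd
  have hx : d.fst ≠ z := fun h => hze (h ▸ Sym2.mem_mk_left _ _)
  have hy : d.snd ≠ z := fun h => hze (h ▸ Sym2.mem_mk_right _ _)
  have hq : q.IsPath := hc.isPath_of_append_left not_nil_cons
  have hr : r.reverse.IsPath :=
    (hc.isPath_of_append_right fun h => hx h.eq.symm).of_cons.reverse
  obtain ⟨a₀, P₀, ha₀, hP₀, hsupp₀⟩ := hq.exists_tail_induce hx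
  obtain ⟨a₁, P₁, ha₁, hP₁, hsupp₁⟩ := hr.exists_tail_induce hy
  have hsupp₁' : ∀ u ∈ P₁.support, u.1 ∈ r.support := fun u hu => by
    simpa using List.mem_of_mem_tail (hsupp₁ u hu)
  have hnodup : (q.support.tail ++ r.support).Nodup := by
    simpa [support_append] using hc.support_nodup
  refine ⟨![⟨d.fst, hx⟩, ⟨d.snd, hy⟩], ![a₀, a₁], fun j => match j with
    | 0 => P₀
    | 1 => P₁, rfl, ?_, ?_, ?_, ?_⟩
  · intro j; fin_cases j
    exacts [ha₀, ha₁]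
  · intro j; fin_cases j
    exacts [hP₀, hP₁]
  · exact fun u hu₀ hu₁ =>
      List.disjoint_of_nodup_append hnodup (hsupp₀ u hu₀) (hsupp₁' u hu₁)
  · intro j u hu
    rw [mem_support_append_iff, support_cons]
    fin_cases j
    · exact .inl (List.mem_of_mem_tail (hsupp₀ u hu))
    · exact .inr (List.mem_cons_of_mem _ (hsupp₁' u hu))

lemma exists_isCycle_of_paths_to_edge {z : V} {b a : Fin 2 → {v // v ≠ z}}
    (P : ∀ j, (G.induce {v | v ≠ z}).Walk (a j) (b j)) (hP : ∀ j, (P j).IsPath)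
    (hdisj : (P 0).support.Disjoint (P 1).support) (ha : ∀ j, G.Adj z (a j))
    (hb : G.Adj (b 0) (b 1)) :
    ∃ c : G.Walk z z, c.IsCycle ∧ s((b 0).1, (b 1).1) ∈ c.edges ∧
      ∀ v ∈ c.support, v = z ∨ ∃ j, ∃ u ∈ (P j).support, u.1 = v := by
  have hb' : (G.induce {v | v ≠ z}).Adj (b 0) (b 1) := hb
  let w : G.Walk (a 0) (a 1) :=
    ((P 0).append (cons hb' (P 1).reverse)).map (Embedding.induce _).toHom
  have hw : w.IsPath :=
    ((hP 0).append_cons (hP 1).reverse (by simpa using hdisj) hb').map Subtype.val_injective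
  have hsupp : w.support = ((P 0).support ++ (P 1).support.reverse).map Subtype.val :=
    (support_map _ _).trans <| by
      rw [support_append, support_cons, support_reverse, List.tail_cons]
      rfl
  have hzw : z ∉ w.support := by
    rw [hsupp, List.mem_map]
    rintro ⟨u, -, hu⟩
    exact u.2 hu
  have hbw : s((b 0).1, (b 1).1) ∈ w.edges := by
    refine (edges_map _ _).symm ▸ ?_
    rw [edges_append, edges_cons]
    exact List.mem_map_of_mem (List.mem_append_right _ List.mem_cons_self)
  have ha01 : (a 0).1 ≠ (a 1).1 := fun h =>
    hdisj (P 0).start_mem_support (by rw [Subtype.ext h]; exact (P 1).start_mem_support)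
  refine ⟨cons (ha 0) (w.concat (ha 1).symm), hw.isCycle_cons_concat hzw ha01 _ _, ?_, ?_⟩
  · rw [edges_cons, edges_concat, List.concat_eq_append]
    exact List.mem_cons_of_mem _ (List.mem_append_left _ hbw)
  · intro v hv
    rw [support_cons, support_concat, hsupp, List.mem_cons,
      List.mem_append, List.mem_singleton, List.mem_map] at hv
    rcases hv with rfl | ⟨u, hu, rfl⟩ | rfl
    · exact .inl rfl
    · rw [List.mem_append, List.mem_reverse] at hu
      rcases hu with hu | hu
      exacts [.inr ⟨0, u, hu, rfl⟩, .inr ⟨1, u, hu, rfl⟩]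
    · exact .inl rfl

lemma injective_of_pairwise_disjoint_support {ι : Type*} {a b : ι → V}
    (P : ∀ i, G.Walk (a i) (b i))
    (hP : Pairwise fun i j => (P i).support.Disjoint (P j).support) : Function.Injective b :=
  fun i j hij => by_contra fun hne =>
    hP hne (P i).end_mem_support (by rw [hij]; exact (P j).end_mem_support)

end SimpleGraph.Walk

open SimpleGraph Walk

theorem stmt7_general {V : Type} (G : SimpleGraph V)
    (S : Set (Sym2 V)) (hS : S ⊆ G.edgeSet) (z : V)
    (hz : ∀ e ∈ S, z ∉ e)
    (t : ℕ) :
    letI Gz := G.induce {v : V | v ≠ z}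
    ((∃ C : Fin t → G.Walk z z,
        (∀ i, (C i).IsCycle) ∧ (∀ i, ∃ e ∈ (C i).edges, e ∈ S) ∧
        (∀ i j, i ≠ j → ∀ v : V, v ∈ (C i).support → v ∈ (C j).support → v = z)) ↔
     (∃ (b : Fin t → Fin 2 → {v : V // v ≠ z})
        (A : Fin t → Fin 2 → {v : V // v ≠ z})
        (P : ∀ (i : Fin t) (j : Fin 2), Gz.Walk (A i j) (b i j)),
        Function.Injective (fun p : Fin t × Fin 2 => b p.1 p.2) ∧
        -- the 2t endpoints are partitioned into t edges of S:
        (∀ i : Fin t, s((b i 0).1, (b i 1).1) ∈ S) ∧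
        -- paths start in N(z):
        (∀ i j, G.Adj z (A i j).1) ∧
        (∀ i j, (P i j).IsPath) ∧
        -- the 2t paths in G - z are pairwise vertex-disjoint:
        (∀ (i i' : Fin t) (j j' : Fin 2), (i, j) ≠ (i', j') →
          ∀ v : {v : V // v ≠ z},
            v ∈ (P i j).support → v ∈ (P i' j').support → False))) := by
  constructor
  · rintro ⟨C, hC, hCS, hCdisj⟩
    choose e he heS using hCS
    choose b A P hbe hA hP hP01 hPC using
      fun i => (hC i).exists_paths_to_edge (he i) (hz _ (heS i))
    have hPdisj : ∀ (i i' : Fin t) (j j' : Fin 2), (i, j) ≠ (i', j') →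
        ∀ v, v ∈ (P i j).support → v ∈ (P i' j').support → False := by
      intro i i' j j' hne v hv hv'
      by_cases hii : i = i'
      · subst hii
        have hjj : j ≠ j' := fun h => hne (h ▸ rfl)
        fin_cases j <;> fin_cases j' <;> simp at hjj
        exacts [hP01 i hv hv', hP01 i hv' hv]
      · exact v.2 (hCdisj i i' hii v (hPC i j v hv) (hPC i' j' v hv'))
    refine ⟨b, A, P, ?_, fun i => hbe i ▸ heS i, hA, hP, hPdisj⟩
    exact injective_of_pairwise_disjoint_support (fun p : Fin t × Fin 2 => P p.1 p.2)
      fun p p' hne => hPdisj p.1 p'.1 p.2 p'.2 hne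
  · rintro ⟨b, A, P, -, hbS, hA, hP, hPdisj⟩
    choose C hC hCS hCsupp using fun i =>
      exists_isCycle_of_paths_to_edge (P i) (hP i) (hPdisj i i 0 1 (by simp)) (hA i)
        (hS (hbS i))
    refine ⟨C, hC, fun i => ⟨_, hCS i, hbS i⟩, fun i i' hii v hv hv' => ?_⟩
    by_contra hvz
    obtain ⟨j, u, hu, rfl⟩ := (hCsupp i v hv).resolve_left hvz
    obtain ⟨j', u', hu', hu'u⟩ := (hCsupp i' u hv').resolve_left hvz
    exact hPdisj i i' j j' (by simp [hii]) u hu (Subtype.ext hu'u ▸ hu')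

/-- Assume no edge of `S` is incident with `z` and `S` is a matching. Then `G` has a
`z`-flower of order `t` iff there is a set of `2t` endpoints of `S`-edges, partitioned
into `t` edges of `S`, that is linked to `N(z)` in `G - z` by `2t` vertex-disjoint paths.
The `2t` endpoints are encoded as `b i j` (`i : Fin t`, `j : Fin 2`), the partition into
`S`-edges by `s(b i 0, b i 1) ∈ S`. -/
theorem stmt7 {V : Type} [Fintype V] [DecidableEq V] (G : SimpleGraph V)
    (S : Set (Sym2 V)) (hS : S ⊆ G.edgeSet) (z : V)
    (hz : ∀ e ∈ S, z ∉ e)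
    (hmatch : ∀ e ∈ S, ∀ f ∈ S, e ≠ f → ∀ v : V, v ∈ e → v ∉ f)
    (t : ℕ) :
    letI Gz := G.induce {v : V | v ≠ z}
    ((∃ C : Fin t → G.Walk z z,
        (∀ i, (C i).IsCycle) ∧ (∀ i, ∃ e ∈ (C i).edges, e ∈ S) ∧
        (∀ i j, i ≠ j → ∀ v : V, v ∈ (C i).support → v ∈ (C j).support → v = z)) ↔
     (∃ (b : Fin t → Fin 2 → {v : V // v ≠ z})
        (A : Fin t → Fin 2 → {v : V // v ≠ z})
        (P : ∀ (i : Fin t) (j : Fin 2), Gz.Walk (A i j) (b i j)),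
        Function.Injective (fun p : Fin t × Fin 2 => b p.1 p.2) ∧
        -- the 2t endpoints are partitioned into t edges of S:
        (∀ i : Fin t, s((b i 0).1, (b i 1).1) ∈ S) ∧
        -- paths start in N(z):
        (∀ i j, G.Adj z (A i j).1) ∧
        (∀ i j, (P i j).IsPath) ∧
        -- the 2t paths in G - z are pairwise vertex-disjoint:
        (∀ (i i' : Fin t) (j j' : Fin 2), (i, j) ≠ (i', j') →
          ∀ v : {v : V // v ≠ z},
            v ∈ (P i j).support → v ∈ (P i' j').support → False))) :=
  stmt7_general G S hS z hz t
end

section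
/- Every tree T has a maximal matching that covers every vertex of degree at least 2, and such a matching can be computed greedily: choosing an edge from the root to a child and recursing on subtrees rooted at non-leaf unmatched vertices yields such a matching. -/
/-!
Root the tree at a vertex `r` and match greedily from the top: a vertex is matched to its parent
exactly when it is the designated first child of its parent and the parent is not itself matched
to its own parent. Distinct matched vertices then give disjoint edges, and every vertex with a
child is covered (by its parent edge, or else by the edge to its first child). In a tree adjacent
vertices lie at distances from `r` that differ by one and shortest paths to `r` are unique, so
every edge joins a vertex to its parent and every vertex of degree at least two has a child.
-/

namespace SimpleGraph

variable {V : Type*} {G : SimpleGraph V} {r : V}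

variable (G r) in
open scoped Classical in
noncomputable def parent (v : V) : V :=
  if h : ∃ w, G.Adj v w ∧ G.dist r w + 1 = G.dist r v then h.choose else v

lemma parent_spec {v : V} (h : ∃ w, G.Adj v w ∧ G.dist r w + 1 = G.dist r v) :
    G.Adj v (G.parent r v) ∧ G.dist r (G.parent r v) + 1 = G.dist r v := by
  rw [parent, dif_pos h]
  exact h.choose_spec

lemma parent_spec_of_ne {v : V} (h : G.parent r v ≠ v) :
    G.Adj v (G.parent r v) ∧ G.dist r (G.parent r v) + 1 = G.dist r v :=
  parent_spec <| by_contra fun hex ↦ h (dif_neg hex)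

variable (G r) in
open scoped Classical in
noncomputable def firstChild (p : V) : V :=
  if h : ∃ c, G.Adj p c ∧ G.parent r c = p then h.choose else p

lemma firstChild_spec {p : V} (h : ∃ c, G.Adj p c ∧ G.parent r c = p) :
    G.Adj p (G.firstChild r p) ∧ G.parent r (G.firstChild r p) = p := by
  rw [firstChild, dif_pos h]
  exact h.choose_spec

-- The guard, which fails at the root, is a binder rather than a conjunct so that the
-- termination proof can use it.
variable (G r) in
noncomputable def MatchedToParent (v : V) : Prop :=
  ∃ _ : G.dist r (G.parent r v) < G.dist r v,
    v = G.firstChild r (G.parent r v) ∧ ¬ MatchedToParent (G.parent r v)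
termination_by G.dist r v

lemma matchedToParent_iff {v : V} :
    G.MatchedToParent r v ↔
      G.dist r (G.parent r v) < G.dist r v ∧ v = G.firstChild r (G.parent r v) ∧
        ¬ G.MatchedToParent r (G.parent r v) := by
  rw [MatchedToParent, exists_prop]

lemma MatchedToParent.adj_parent {v : V} (h : G.MatchedToParent r v) :
    G.Adj v (G.parent r v) :=
  (parent_spec_of_ne fun he ↦ (matchedToParent_iff.mp h).1.ne (congrArg _ he)).1

lemma MatchedToParent.eq_firstChild {v : V} (h : G.MatchedToParent r v) :
    v = G.firstChild r (G.parent r v) :=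
  (matchedToParent_iff.mp h).2.1

lemma MatchedToParent.not_parent {v : V} (h : G.MatchedToParent r v) :
    ¬ G.MatchedToParent r (G.parent r v) :=
  (matchedToParent_iff.mp h).2.2

lemma matchedToParent_firstChild {p : V} (hp : ¬ G.MatchedToParent r p)
    (h : ∃ c, G.Adj p c ∧ G.parent r c = p) : G.MatchedToParent r (G.firstChild r p) := by
  obtain ⟨hadj, hpar⟩ := firstChild_spec h
  have hne : G.parent r (G.firstChild r p) ≠ G.firstChild r p := by rw [hpar]; exact hadj.ne
  have hdist := (parent_spec_of_ne hne).2
  rw [hpar] at hdist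
  rw [matchedToParent_iff, hpar]
  exact ⟨by omega, rfl, hp⟩

variable (G r) in
noncomputable def greedyMatching : G.Subgraph :=
  ⨆ v : {v // G.MatchedToParent r v}, G.subgraphOfAdj v.2.adj_parent

lemma isMatching_greedyMatching : (G.greedyMatching r).IsMatching := by
  refine Subgraph.IsMatching.iSup (fun v ↦ .subgraphOfAdj _) ?_
  rintro ⟨v, hv⟩ ⟨w, hw⟩ hvw
  simp only [support_subgraphOfAdj, Set.disjoint_insert_left, Set.mem_insert_iff,
    Set.mem_singleton_iff, Set.disjoint_singleton_left, not_or]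
  refine ⟨⟨fun h ↦ hvw (Subtype.ext h), fun h ↦ hw.not_parent (h ▸ hv)⟩,
    fun h ↦ hv.not_parent (h ▸ hw), fun h ↦ hvw (Subtype.ext ?_)⟩
  exact hv.eq_firstChild.trans (h ▸ hw.eq_firstChild.symm)

lemma mem_greedyMatching_verts_of_matchedToParent {v : V} (h : G.MatchedToParent r v) :
    v ∈ (G.greedyMatching r).verts ∧ G.parent r v ∈ (G.greedyMatching r).verts := by
  simp only [greedyMatching, Subgraph.verts_iSup, subgraphOfAdj_verts, Set.mem_iUnion]
  exact ⟨⟨⟨v, h⟩, by simp⟩, ⟨⟨v, h⟩, by simp⟩⟩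

lemma mem_greedyMatching_verts_of_parent_eq {p c : V} (hadj : G.Adj p c)
    (hc : G.parent r c = p) : p ∈ (G.greedyMatching r).verts := by
  by_cases hp : G.MatchedToParent r p
  · exact (mem_greedyMatching_verts_of_matchedToParent hp).1
  · have hchild : ∃ c, G.Adj p c ∧ G.parent r c = p := ⟨c, hadj, hc⟩
    have := (mem_greedyMatching_verts_of_matchedToParent
      (matchedToParent_firstChild hp hchild)).2
    rwa [(firstChild_spec hchild).2] at this

namespace IsTree

variable (hT : G.IsTree)
include hT

lemma eq_of_adj_of_dist_add_one_eq {c w₁ w₂ : V} (h₁ : G.Adj c w₁)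
    (hd₁ : G.dist r w₁ + 1 = G.dist r c) (h₂ : G.Adj c w₂) (hd₂ : G.dist r w₂ + 1 = G.dist r c) :
    w₁ = w₂ := by
  have geodesic_through {w : V} (h : G.Adj c w) (hd : G.dist r w + 1 = G.dist r c) :
      ∃ p : G.Path c r, p.1.snd = w := by
    obtain ⟨q, -, hq⟩ := hT.connected.exists_path_of_dist w r
    refine ⟨⟨.cons h q, Walk.isPath_of_length_eq_dist _ ?_⟩, by simp⟩
    rw [Walk.length_cons, hq, dist_comm, hd, dist_comm]
  obtain ⟨p₁, rfl⟩ := geodesic_through h₁ hd₁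
  obtain ⟨p₂, rfl⟩ := geodesic_through h₂ hd₂
  rw [(hT.isAcyclic.subsingleton_path c r).elim p₁ p₂]

variable (r) in
lemma parent_eq_or_parent_eq_of_adj {u v : V} (h : G.Adj u v) :
    G.parent r v = u ∨ G.parent r u = v := by
  have parent_eq {a b : V} (h : G.Adj a b) (hd : G.dist r a = G.dist r b + 1) :
      G.parent r a = b := by
    have hspec := parent_spec ⟨b, h, hd.symm⟩
    exact hT.eq_of_adj_of_dist_add_one_eq hspec.1 hspec.2 h hd.symm
  rcases hT.dist_eq_dist_add_one_of_adj r h with hd | hd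
  · exact .inr (parent_eq h hd)
  · exact .inl (parent_eq h.symm hd)

variable (r) in
lemma exists_parent_eq_of_two_le_degree {v : V} [Fintype (G.neighborSet v)]
    (h : 2 ≤ G.degree v) : ∃ c, G.Adj v c ∧ G.parent r c = v := by
  obtain ⟨c₁, h₁, c₂, h₂, hne⟩ :=
    Finset.one_lt_card.mp (G.card_neighborFinset_eq_degree v ▸ h : 1 < (G.neighborFinset v).card)
  rw [mem_neighborFinset] at h₁ h₂
  by_contra! hno
  rcases hT.parent_eq_or_parent_eq_of_adj r h₁ with h₁' | h₁'
  · exact hno c₁ h₁ h₁'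
  rcases hT.parent_eq_or_parent_eq_of_adj r h₂ with h₂' | h₂'
  · exact hno c₂ h₂ h₂'
  exact hne (h₁'.symm.trans h₂')

end IsTree

end SimpleGraph

theorem stmt11_general {V : Type} [Fintype V] (T : SimpleGraph V)
    [DecidableRel T.Adj] (htree : T.Connected ∧ T.IsAcyclic) :
    ∃ M : T.Subgraph, M.IsMatching ∧
      (∀ u v : V, T.Adj u v → u ∈ M.verts ∨ v ∈ M.verts) ∧
      (∀ v : V, 2 ≤ T.degree v → v ∈ M.verts) := by
  have hT : T.IsTree := ⟨htree.1, htree.2⟩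
  obtain ⟨r⟩ := hT.connected.nonempty
  refine ⟨T.greedyMatching r, SimpleGraph.isMatching_greedyMatching, fun u v huv ↦ ?_, fun v hv ↦ ?_⟩
  · rcases hT.parent_eq_or_parent_eq_of_adj r huv with h | h
    · exact .inl (SimpleGraph.mem_greedyMatching_verts_of_parent_eq huv h)
    · exact .inr (SimpleGraph.mem_greedyMatching_verts_of_parent_eq huv.symm h)
  · obtain ⟨c, hvc, hc⟩ := hT.exists_parent_eq_of_two_le_degree r hv
    exact SimpleGraph.mem_greedyMatching_verts_of_parent_eq hvc hc

/-- Every finite tree has a maximal matching covering every vertex of degree at least 2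
(every inner vertex); such a matching can be obtained greedily along the tree. -/
theorem stmt11 {V : Type} [Fintype V] [DecidableEq V] (T : SimpleGraph V)
    [DecidableRel T.Adj] (htree : T.Connected ∧ T.IsAcyclic) :
    ∃ M : T.Subgraph, M.IsMatching ∧
      (∀ u v : V, T.Adj u v → u ∈ M.verts ∨ v ∈ M.verts) ∧
      (∀ v : V, 2 ≤ T.degree v → v ∈ M.verts) :=
  stmt11_general T htree
end

section
/- Let H be a forest on vertex set D and let M be a maximal matching in H covering every vertex of degree ≥ 2. Then the number of edges of H is at most 2|M| + |L|, where L is the set of degree-1 vertices of H not covered by M; moreover, every vertex in L is adjacent to a vertex of degree ≥ 2. -/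
set_option linter.unusedSectionVars false
open SimpleGraph


variable {V : Type} [Fintype V] [DecidableEq V]

noncomputable def groot (H : SimpleGraph V) (v : V) : V := (H.connectedComponentMk v).out

lemma groot_reach (H : SimpleGraph V) (v : V) : H.Reachable v (groot H v) :=
  (ConnectedComponent.eq.mp (H.connectedComponentMk v).out_eq).symm

lemma groot_adj (H : SimpleGraph V) {u v : V} (h : H.Adj u v) : groot H u = groot H v :=
  congrArg Quot.out (ConnectedComponent.eq.mpr h.reachable)

lemma forest_inj {H : SimpleGraph V} (hforest : H.IsAcyclic) {x u v r : V}
    (hu : H.Adj x u) (hv : H.Adj x v)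
    (hru : H.Reachable u r) (hrv : H.Reachable v r)
    (hdu : H.dist u r < H.dist x r) (hdv : H.dist v r < H.dist x r) : u = v := by
  obtain ⟨p, hp, hpl⟩ := hru.exists_path_of_dist
  obtain ⟨q, hq, hql⟩ := hrv.exists_path_of_dist
  have hxp : x ∉ p.support := by
    intro hx
    have h1 : H.dist x r ≤ (p.dropUntil x hx).length := dist_le _
    have h2 := p.length_dropUntil_le hx
    omega
  have hxq : x ∉ q.support := by
    intro hx
    have h1 : H.dist x r ≤ (q.dropUntil x hx).length := dist_le _
    have h2 := q.length_dropUntil_le hx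
    omega
  have hP1 : (Walk.cons hu p).IsPath := (Walk.cons_isPath_iff hu p).mpr ⟨hp, hxp⟩
  have hP2 : (Walk.cons hv q).IsPath := (Walk.cons_isPath_iff hv q).mpr ⟨hq, hxq⟩
  have heq := hforest.path_unique ⟨_, hP1⟩ ⟨_, hP2⟩
  have hw := congrArg (fun w : H.Path x r => w.1.support) heq
  simp only [Walk.support_cons] at hw
  rw [p.support_eq_cons, q.support_eq_cons] at hw
  simp only [List.cons.injEq] at hw
  exact hw.2.1

lemma forest_dist_ne {H : SimpleGraph V} (hforest : H.IsAcyclic) {u v r : V}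
    (huv : H.Adj u v) (hru : H.Reachable u r) (hrv : H.Reachable v r) :
    H.dist u r ≠ H.dist v r := by
  intro heq
  obtain ⟨p, hp, hpl⟩ := hru.exists_path_of_dist
  have hvp : v ∉ p.support := by
    intro hv
    have h1 : H.dist v r ≤ (p.dropUntil v hv).length := dist_le _
    have h2 := congrArg Walk.length (p.take_spec hv)
    rw [Walk.length_append] at h2
    have h3 : (p.takeUntil v hv).length ≠ 0 := fun h0 => huv.ne (Walk.eq_of_length_eq_zero h0)
    omega
  have hP : (Walk.cons huv.symm p).IsPath := (Walk.cons_isPath_iff _ _).mpr ⟨hp, hvp⟩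
  obtain ⟨q, hq, hql⟩ := hrv.exists_path_of_dist
  have heq2 := hforest.path_unique ⟨_, hP⟩ ⟨q, hq⟩
  have hlen := congrArg (fun w : H.Path v r => w.1.length) heq2
  simp only [Walk.length_cons] at hlen
  omega

lemma matching_card {H : SimpleGraph V} {M : H.Subgraph}
    (hmatch : M.IsMatching) : M.verts.ncard = 2 * M.edgeSet.ncard := by
  classical
  have hother : ∀ e, e ∈ M.edgeSet → ∀ x ∈ e, ∃ y, M.Adj x y ∧ e = s(x, y) := by
    intro e
    induction e using Sym2.inductionOn with
    | hf a b =>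
      intro he x hx
      rw [SimpleGraph.Subgraph.mem_edgeSet] at he
      rcases Sym2.mem_iff.mp hx with rfl | rfl
      · exact ⟨b, he, rfl⟩
      · exact ⟨a, he.symm, Sym2.eq_swap.symm⟩
  set f : Sym2 V → Finset V := fun e => Set.toFinset {x | x ∈ e} with hf
  have hcard : ∀ e ∈ M.edgeSet.toFinset, (f e).card = 2 := by
    intro e
    induction e using Sym2.inductionOn with
    | hf a b =>
      intro he
      rw [Set.mem_toFinset] at he
      have hne : a ≠ b := (M.adj_sub (SimpleGraph.Subgraph.mem_edgeSet.mp he)).ne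
      have hset : {x | x ∈ s(a,b)} = ({a, b} : Set V) := by
        ext x; simp [Sym2.mem_iff]
      rw [hf]
      simp only [hset, Set.toFinset_insert, Set.toFinset_singleton]
      exact Finset.card_pair hne
  have hunion : M.verts.toFinset = M.edgeSet.toFinset.biUnion f := by
    ext v
    simp only [Set.mem_toFinset, Finset.mem_biUnion, hf, Set.mem_setOf_eq]
    constructor
    · intro hv
      obtain ⟨w, hw, -⟩ := hmatch hv
      exact ⟨s(v, w), SimpleGraph.Subgraph.mem_edgeSet.mpr hw, Sym2.mem_mk_left _ _⟩
    · rintro ⟨e, he, hv⟩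
      obtain ⟨y, hy, -⟩ := hother e he v hv
      exact M.edge_vert hy
  have hdisj : ∀ e1 ∈ M.edgeSet.toFinset, ∀ e2 ∈ M.edgeSet.toFinset,
      e1 ≠ e2 → Disjoint (f e1) (f e2) := by
    intro e1 he1 e2 he2 hne
    rw [Set.mem_toFinset] at he1 he2
    rw [Finset.disjoint_left]
    intro x hx1 hx2
    simp only [hf, Set.mem_toFinset, Set.mem_setOf_eq] at hx1 hx2
    obtain ⟨y1, hy1, he1'⟩ := hother e1 he1 x hx1
    obtain ⟨y2, hy2, he2'⟩ := hother e2 he2 x hx2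
    obtain ⟨w, -, huniq⟩ := hmatch (M.edge_vert hy1)
    exact hne (by rw [he1', he2', huniq y1 hy1, huniq y2 hy2])
  have hb := Finset.card_biUnion hdisj
  rw [← hunion, Finset.sum_congr rfl hcard] at hb
  rw [Set.ncard_eq_toFinset_card', Set.ncard_eq_toFinset_card', hb]
  simp [mul_comm]

lemma sym2_max (d : V → ℕ) (e : Sym2 V) : ∃ u ∈ e, ∀ w ∈ e, d w ≤ d u := by
  induction e using Sym2.inductionOn with
  | hf a b =>
    rcases le_total (d a) (d b) with h | h
    · exact ⟨b, by simp, fun w hw => by rcases Sym2.mem_iff.mp hw with rfl | rfl <;> simp [h]⟩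
    · exact ⟨a, by simp, fun w hw => by rcases Sym2.mem_iff.mp hw with rfl | rfl <;> simp [h]⟩



/-- For a forest `H` and a maximal matching `M` covering every vertex of degree ≥ 2:
`|E(H)| ≤ 2|M| + |L|`, where `L` is the set of degree-1 vertices not covered by `M`;
moreover every vertex of `L` is adjacent to a vertex of degree ≥ 2. -/
theorem stmt12 {V : Type} [Fintype V] [DecidableEq V] (H : SimpleGraph V)
    [DecidableRel H.Adj] (hforest : H.IsAcyclic) (M : H.Subgraph)
    (hmatch : M.IsMatching)
    (hmaximal : ∀ u v : V, H.Adj u v → u ∈ M.verts ∨ v ∈ M.verts)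
    (hinner : ∀ v : V, 2 ≤ H.degree v → v ∈ M.verts) :
    letI L : Set V := {v : V | H.degree v = 1 ∧ v ∉ M.verts}
    H.edgeSet.ncard ≤ 2 * M.edgeSet.ncard + L.ncard ∧
      ∀ v ∈ L, ∃ w : V, H.Adj v w ∧ 2 ≤ H.degree w := by
  classical
  set L : Set V := {v : V | H.degree v = 1 ∧ v ∉ M.verts} with hL
  refine ⟨?_, ?_⟩
  · -- counting
    set d : V → ℕ := fun v => H.dist v (groot H v) with hd
    have hmem : ∀ v w, H.Adj v w → v ∈ M.verts ∪ L := by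
      intro v w h
      by_cases hv : v ∈ M.verts
      · exact Or.inl hv
      · refine Or.inr ⟨?_, hv⟩
        have h1 : 0 < H.degree v := by
          rw [H.degree_pos_iff_exists_adj]; exact ⟨w, h⟩
        have h2 : ¬ 2 ≤ H.degree v := fun h2 => hv (hinner v h2)
        omega
    have hmax := sym2_max d
    set f : Sym2 V → V := fun e => (hmax e).choose with hfdef
    have hf1 : ∀ e, f e ∈ e ∧ ∀ w ∈ e, d w ≤ d (f e) := fun e => (hmax e).choose_spec
    have hstruct : ∀ e, e ∈ H.edgeSet → ∃ y, H.Adj (f e) y ∧ e = s(f e, y) ∧ d y < d (f e) := by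
      intro e
      induction e using Sym2.inductionOn with
      | hf a b =>
        intro he
        have hab : H.Adj a b := H.mem_edgeSet.mp he
        obtain ⟨hfe, hfmax⟩ := hf1 s(a, b)
        have hroot : groot H a = groot H b := groot_adj H hab
        have hne : d a ≠ d b := by
          have := forest_dist_ne hforest hab (groot_reach H a) (hroot ▸ groot_reach H b)
          rw [hd]; simpa [hroot] using this
        rcases Sym2.mem_iff.mp hfe with h | h
        · rw [h]
          have hle := hfmax b (Sym2.mem_mk_right a b)
          rw [h] at hle
          exact ⟨b, hab, rfl, lt_of_le_of_ne hle (Ne.symm hne)⟩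
        · rw [h]
          have hle := hfmax a (Sym2.mem_mk_left a b)
          rw [h] at hle
          exact ⟨a, hab.symm, Sym2.eq_swap.symm, lt_of_le_of_ne hle hne⟩
    have hsub : ∀ e ∈ H.edgeSet, f e ∈ M.verts ∪ L := by
      intro e he
      obtain ⟨y, ha, -, -⟩ := hstruct e he
      exact hmem _ _ ha
    have hinj : Set.InjOn f H.edgeSet := by
      intro e1 he1 e2 he2 heq
      obtain ⟨y1, ha1, he1', hd1⟩ := hstruct e1 he1
      obtain ⟨y2, ha2, he2', hd2⟩ := hstruct e2 he2
      rw [heq] at ha1 hd1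
      by_cases hy : y1 = y2
      · rw [he1', he2', heq, hy]
      · exfalso
        set x := f e2 with hx
        set r := groot H x with hr
        have hr1 : groot H y1 = r := (groot_adj H ha1.symm)
        have hr2 : groot H y2 = r := (groot_adj H ha2.symm)
        have hd1' : H.dist y1 r < H.dist x r := by
          simp only [hd] at hd1
          rwa [hr1, ← hr] at hd1
        have hd2' : H.dist y2 r < H.dist x r := by
          simp only [hd] at hd2
          rwa [hr2, ← hr] at hd2
        exact hy (forest_inj hforest ha1 ha2 (hr1 ▸ groot_reach H y1)
          (hr2 ▸ groot_reach H y2) hd1' hd2')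
    have h1 : H.edgeSet.ncard ≤ (M.verts ∪ L).ncard :=
      Set.ncard_le_ncard_of_injOn f hsub hinj (Set.toFinite _)
    have h2 : (M.verts ∪ L).ncard ≤ M.verts.ncard + L.ncard := Set.ncard_union_le _ _
    have h3 : M.verts.ncard = 2 * M.edgeSet.ncard := matching_card hmatch
    omega
  · -- every vertex of L has a neighbor of degree ≥ 2
    rintro v ⟨hdeg, hv⟩
    have h1 : 0 < H.degree v := by omega
    obtain ⟨w, hw⟩ := H.degree_pos_iff_exists_adj v |>.mp h1
    refine ⟨w, hw, ?_⟩
    by_contra hcon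
    have hw1 : H.degree w = 1 := by
      have : 0 < H.degree w := by
        rw [H.degree_pos_iff_exists_adj]; exact ⟨v, hw.symm⟩
      omega
    have hwM : w ∈ M.verts := (hmaximal v w hw).resolve_left hv
    obtain ⟨x, hx, -⟩ := hmatch hwM
    have hxH : H.Adj w x := M.adj_sub hx
    -- both v and x are neighbors of w, degree w = 1 forces x = v
    have : x = v := by
      have hcard : (H.neighborFinset w).card = 1 := by rwa [H.card_neighborFinset_eq_degree]
      obtain ⟨a, ha⟩ := Finset.card_eq_one.mp hcard
      have h1 : x ∈ H.neighborFinset w := by rwa [SimpleGraph.mem_neighborFinset]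
      have h2 : v ∈ H.neighborFinset w := by
        rw [SimpleGraph.mem_neighborFinset]; exact hw.symm
      rw [ha, Finset.mem_singleton] at h1 h2
      rw [h1, ← h2]
    rw [this] at hx
    exact hv (M.edge_vert hx.symm)
end

section
/- Let G be an undirected graph, S ⊆ E(G), and suppose every edge e ∈ S is subdivided so that e = {v,w} is replaced by a path v, v_e, w_e, w with {v_e, w_e} the new S-edge. Then for every set X of at most k vertices intersecting all S-cycles of the subdivided graph, the set X' obtained by replacing each subdivision vertex x_e ∈ X by the corresponding original endpoint x is also a set of at most k vertices intersecting all S-cycles; hence if a solution exists, a solution disjoint from all endpoints of S-edges exists. -/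
/-!
A subdivision vertex `v_e` has exactly two neighbours, its endpoint `v` and its twin `w_e`, while
every vertex of a cycle has two distinct neighbours on that cycle; so every cycle through `v_e`
passes through `v`. The set `X'` is the image of `X` under the map sending each subdivision vertex
to its endpoint, so it is no larger than `X`, and it meets every cycle that `X` meets.
-/

namespace SimpleGraph.Walk

variable {W : Type*} {G : SimpleGraph W}

theorem IsCycle.exists_adj_mem_support_ne {u x : W} {c : G.Walk u u} (hc : c.IsCycle)
    (hx : x ∈ c.support) :
    ∃ a ∈ c.support, ∃ b ∈ c.support, a ≠ b ∧ G.Adj x a ∧ G.Adj x b := by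
  classical
  set d := c.rotate x hx
  have hd : d.IsCycle := hc.rotate hx
  refine ⟨d.snd, ?_, d.penultimate, ?_, hd.snd_ne_penultimate, d.adj_snd hd.not_nil,
    (d.adj_penultimate hd.not_nil).symm⟩ <;>
  exact (c.mem_support_rotate_iff x hx).mp (d.getVert_mem_support _)

theorem IsCycle.mem_support_of_neighborSet_subset {u x a₁ a₂ : W} {c : G.Walk u u}
    (hc : c.IsCycle) (hx : x ∈ c.support) (hnb : G.neighborSet x ⊆ {a₁, a₂}) :
    a₁ ∈ c.support ∧ a₂ ∈ c.support := by
  obtain ⟨a, ha, b, hb, hab, hxa, hxb⟩ := hc.exists_adj_mem_support_ne hx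
  rcases hnb hxa with rfl | rfl <;> rcases hnb hxb with rfl | rfl
  all_goals first | exact absurd rfl hab | exact ⟨ha, hb⟩ | exact ⟨hb, ha⟩

end SimpleGraph.Walk

namespace SimpleGraph

variable {V ι : Type*}

def subdivide (G : SimpleGraph V) (S : Set (Sym2 V)) (ep : ι → V × V) :
    SimpleGraph (V ⊕ ι × Bool) :=
  fromRel fun a b =>
    (∃ u v : V, a = Sum.inl u ∧ b = Sum.inl v ∧ G.Adj u v ∧ s(u, v) ∉ S) ∨
    (∃ i : ι, a = Sum.inl (ep i).1 ∧ b = Sum.inr (i, false)) ∨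
    (∃ i : ι, a = Sum.inl (ep i).2 ∧ b = Sum.inr (i, true)) ∨
    (∃ i : ι, a = Sum.inr (i, false) ∧ b = Sum.inr (i, true))

namespace subdivide

def base (ep : ι → V × V) : V ⊕ ι × Bool → V
  | .inl v => v
  | .inr (i, false) => (ep i).1
  | .inr (i, true) => (ep i).2

theorem image_inl_comp_base (ep : ι → V × V) (X : Set (V ⊕ ι × Bool)) :
    (Sum.inl ∘ base ep) '' X = {w : V ⊕ ι × Bool | ∃ v : V, w = Sum.inl v ∧
      (Sum.inl v ∈ X ∨ (∃ i : ι, v = (ep i).1 ∧ Sum.inr (i, false) ∈ X) ∨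
        (∃ i : ι, v = (ep i).2 ∧ Sum.inr (i, true) ∈ X))} := by
  ext w
  constructor
  · rintro ⟨v | ⟨i, _ | _⟩, hx, rfl⟩
    exacts [⟨v, rfl, .inl hx⟩, ⟨_, rfl, .inr (.inl ⟨i, rfl, hx⟩)⟩,
      ⟨_, rfl, .inr (.inr ⟨i, rfl, hx⟩)⟩]
  · rintro ⟨v, rfl, hv | ⟨i, rfl, hi⟩ | ⟨i, rfl, hi⟩⟩
    exacts [⟨_, hv, rfl⟩, ⟨_, hi, rfl⟩, ⟨_, hi, rfl⟩]

variable {G : SimpleGraph V} {S : Set (Sym2 V)} {ep : ι → V × V}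

theorem neighborSet_inr_subset (i : ι) (b : Bool) :
    (G.subdivide S ep).neighborSet (.inr (i, b)) ⊆
      {.inl (base ep (.inr (i, b))), .inr (i, !b)} := by
  intro a ha
  simp only [mem_neighborSet, subdivide, fromRel_adj] at ha
  cases b <;>
  obtain ⟨-, h | h⟩ := ha <;>
  rcases h with ⟨u, v, h1, h2, -, -⟩ | ⟨j, h1, h2⟩ | ⟨j, h1, h2⟩ | ⟨j, h1, h2⟩ <;>
  simp_all [base]

theorem _root_.SimpleGraph.Walk.IsCycle.inl_subdivide_base_mem_support {u x : V ⊕ ι × Bool}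
    {c : (G.subdivide S ep).Walk u u} (hc : c.IsCycle) (hx : x ∈ c.support) :
    .inl (base ep x) ∈ c.support := by
  rcases x with v | ⟨i, b⟩
  · exact hx
  · exact (hc.mem_support_of_neighborSet_subset hx (neighborSet_inr_subset i b)).1

end subdivide

end SimpleGraph

theorem stmt13_general {V ι : Type} [Fintype V] [Fintype ι] (G : SimpleGraph V)
    (S : Set (Sym2 V)) (ep : ι → V × V) (k : ℕ) :
    letI W := V ⊕ ι × Bool
    letI G' : SimpleGraph W := SimpleGraph.fromRel (fun a b =>
      (∃ u v : V, a = Sum.inl u ∧ b = Sum.inl v ∧ G.Adj u v ∧ s(u, v) ∉ S) ∨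
      (∃ i : ι, a = Sum.inl (ep i).1 ∧ b = Sum.inr (i, false)) ∨
      (∃ i : ι, a = Sum.inl (ep i).2 ∧ b = Sum.inr (i, true)) ∨
      (∃ i : ι, a = Sum.inr (i, false) ∧ b = Sum.inr (i, true)))
    letI Snew : Set (Sym2 W) :=
      {e | ∃ i : ι, e = s(Sum.inr (i, false), Sum.inr (i, true))}
    letI Hits : Set W → Prop := fun X =>
      ∀ (w : W) (c : G'.Walk w w), c.IsCycle → (∃ e ∈ c.edges, e ∈ Snew) →
        ∃ x ∈ X, x ∈ c.support
    ∀ X : Set W, X.ncard ≤ k → Hits X →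
      letI X' : Set W := {w | ∃ v : V, w = Sum.inl v ∧
        (Sum.inl v ∈ X ∨ (∃ i : ι, v = (ep i).1 ∧ Sum.inr (i, false) ∈ X) ∨
          (∃ i : ι, v = (ep i).2 ∧ Sum.inr (i, true) ∈ X))}
      X'.ncard ≤ k ∧ Hits X' ∧ (∀ w ∈ X', ∃ v : V, w = Sum.inl v) := by
  intro X hXk hHits
  simp only [← SimpleGraph.subdivide.image_inl_comp_base]
  refine ⟨(Set.ncard_image_le X.toFinite).trans hXk, fun w c hc hcS => ?_, ?_⟩
  · obtain ⟨x, hxX, hxc⟩ := hHits w c hc hcS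
    exact ⟨_, Set.mem_image_of_mem _ hxX, hc.inl_subdivide_base_mem_support hxc⟩
  · rintro _ ⟨x, -, rfl⟩
    exact ⟨_, rfl⟩

/-- Subdividing each `S`-edge `{v,w}` into `v, v_e, w_e, w` (with `{v_e, w_e}` the new
`S`-edge): if `X` is a set of at most `k` vertices hitting all `S`-cycles of the
subdivided graph, then the set `X'` obtained by replacing each subdivision vertex by its
corresponding original endpoint also has at most `k` vertices and hits all `S`-cycles;
hence if a solution exists, a solution disjoint from all endpoints of the new `S`-edges
exists. The `S`-edges of `G` are enumerated by `ι` via `ep`, and the subdivided graph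
lives on `V ⊕ ι × Bool` (with `(i, false)`, `(i, true)` the two subdivision vertices of
edge `i`). -/
theorem stmt13 {V ι : Type} [Fintype V] [Fintype ι] [DecidableEq V] (G : SimpleGraph V)
    (S : Set (Sym2 V)) (hS : S ⊆ G.edgeSet) (ep : ι → V × V)
    (hep : ∀ i, s((ep i).1, (ep i).2) ∈ S)
    (hepinj : Function.Injective (fun i => s((ep i).1, (ep i).2)))
    (hepsurj : ∀ e ∈ S, ∃ i, e = s((ep i).1, (ep i).2)) (k : ℕ) :
    letI W := V ⊕ ι × Bool
    letI G' : SimpleGraph W := SimpleGraph.fromRel (fun a b =>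
      (∃ u v : V, a = Sum.inl u ∧ b = Sum.inl v ∧ G.Adj u v ∧ s(u, v) ∉ S) ∨
      (∃ i : ι, a = Sum.inl (ep i).1 ∧ b = Sum.inr (i, false)) ∨
      (∃ i : ι, a = Sum.inl (ep i).2 ∧ b = Sum.inr (i, true)) ∨
      (∃ i : ι, a = Sum.inr (i, false) ∧ b = Sum.inr (i, true)))
    letI Snew : Set (Sym2 W) :=
      {e | ∃ i : ι, e = s(Sum.inr (i, false), Sum.inr (i, true))}
    letI Hits : Set W → Prop := fun X =>
      ∀ (w : W) (c : G'.Walk w w), c.IsCycle → (∃ e ∈ c.edges, e ∈ Snew) →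
        ∃ x ∈ X, x ∈ c.support
    ∀ X : Set W, X.ncard ≤ k → Hits X →
      letI X' : Set W := {w | ∃ v : V, w = Sum.inl v ∧
        (Sum.inl v ∈ X ∨ (∃ i : ι, v = (ep i).1 ∧ Sum.inr (i, false) ∈ X) ∨
          (∃ i : ι, v = (ep i).2 ∧ Sum.inr (i, true) ∈ X))}
      X'.ncard ≤ k ∧ Hits X' ∧ (∀ w ∈ X', ∃ v : V, w = Sum.inl v) :=
  stmt13_general G S ep k
end

section
/- Let G be an undirected graph, S ⊆ E(G), and e ∈ S an edge that is a bridge in the graph (V, E \ (S \ {e})). Then a set X ⊆ V intersects all S-cycles of G if and only if X intersects all (S \ {e})-cycles of G. -/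
namespace SimpleGraph

variable {V : Type*} {G : SimpleGraph V}

/-- A cycle of `G` avoiding `T` is a cycle of `G.deleteEdges T`, and cycles never pass through
bridges. -/
theorem Walk.IsCycle.notMem_edges_of_isBridge_deleteEdges {T : Set (Sym2 V)} {e : Sym2 V}
    {v : V} {c : G.Walk v v} (hc : c.IsCycle) (hT : ∀ f ∈ c.edges, f ∉ T)
    (hbridge : (G.deleteEdges T).IsBridge e) : e ∉ c.edges := by
  have hsub : ∀ f ∈ c.edges, f ∈ (G.deleteEdges T).edgeSet := fun f hf => by
    rw [edgeSet_deleteEdges]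
    exact ⟨c.edges_subset_edgeSet hf, hT f hf⟩
  simpa only [Walk.edges_transfer] using
    hbridge.notMem_edges_of_isCycle (hc.transfer hsub)

theorem Walk.IsCycle.exists_mem_edges_diff_singleton {S : Set (Sym2 V)} {e : Sym2 V}
    {v : V} {c : G.Walk v v} (hc : c.IsCycle)
    (hbridge : (G.deleteEdges (S \ {e})).IsBridge e) (hS : ∃ f ∈ c.edges, f ∈ S) :
    ∃ f ∈ c.edges, f ∈ S \ {e} := by
  by_contra! hT
  obtain ⟨f, hf, hfS⟩ := hS
  have hfe : f = e := by
    by_contra hfe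
    exact hT f hf ⟨hfS, hfe⟩
  exact hc.notMem_edges_of_isBridge_deleteEdges hT hbridge (hfe ▸ hf)

end SimpleGraph

theorem stmt14_general {V : Type} (G : SimpleGraph V)
    (S : Set (Sym2 V)) (e : Sym2 V)
    (hbridge : (G.deleteEdges (S \ {e})).IsBridge e) :
    ∀ X : Set V,
      ((∀ (v : V) (c : G.Walk v v), c.IsCycle → (∃ f ∈ c.edges, f ∈ S) →
          ∃ x ∈ X, x ∈ c.support) ↔
       (∀ (v : V) (c : G.Walk v v), c.IsCycle → (∃ f ∈ c.edges, f ∈ S \ {e}) →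
          ∃ x ∈ X, x ∈ c.support)) := fun _ =>
  ⟨fun h v c hc ⟨f, hf, hfS⟩ => h v c hc ⟨f, hf, hfS.1⟩,
    fun h v c hc hS => h v c hc (hc.exists_mem_edges_diff_singleton hbridge hS)⟩

/-- If `e ∈ S` is a bridge in the graph `(V, E \ (S \ {e}))`, then a vertex set `X`
meets all `S`-cycles of `G` iff it meets all `(S \ {e})`-cycles of `G`. -/
theorem stmt14 {V : Type} [Fintype V] [DecidableEq V] (G : SimpleGraph V)
    (S : Set (Sym2 V)) (hS : S ⊆ G.edgeSet) (e : Sym2 V) (he : e ∈ S)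
    (hbridge : (G.deleteEdges (S \ {e})).IsBridge e) :
    ∀ X : Set V,
      ((∀ (v : V) (c : G.Walk v v), c.IsCycle → (∃ f ∈ c.edges, f ∈ S) →
          ∃ x ∈ X, x ∈ c.support) ↔
       (∀ (v : V) (c : G.Walk v v), c.IsCycle → (∃ f ∈ c.edges, f ∈ S \ {e}) →
          ∃ x ∈ X, x ∈ c.support)) :=
  stmt14_general G S e hbridge
end

section
/- Let G be an undirected graph, S ⊆ E(G), and Z ⊆ V(G) a set disjoint from V(S) such that G - Z contains no S-cycle. Then |S| is at most the number of connected components of G - Z - S that contain an endpoint of an edge of S (i.e., the number of non-solitary bubbles). -/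
/-!
Put `K = G - Z` and let `T` be the set of `S`-edges, viewed in `K`. Since no cycle of `K` passes
through an `S`-edge, every edge of `T` is a bridge of `K`. Contracting the components of `K - T`
(the bubbles) therefore sends distinct `T`-edges to distinct non-loop edges, and the resulting
bubble graph is a forest: a path between the ends of a contracted `T`-edge avoiding it would lift
to a path in `K` avoiding the bridge. A forest has at most as many edges as non-isolated vertices,
and every non-isolated vertex of the bubble graph is a non-solitary bubble.
-/

namespace SimpleGraph

section Forest

variable {W : Type*} {B : SimpleGraph W}

theorem IsAcyclic.eq_penultimate_of_adj_of_dist_lt [DecidableEq W] (hB : B.IsAcyclic)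
    {r v a : W} {p : B.Walk r v} (hp : p.IsPath) (hav : B.Adj a v)
    (ha : B.dist r a < B.dist r v) :
    a = p.penultimate := by
  obtain ⟨q, hq, hql⟩ := (p.reachable.trans hav.symm.reachable).exists_path_of_dist
  have hvq : v ∉ q.support := fun hv =>
    (dist_le (q.takeUntil v hv)).trans (q.length_takeUntil_le_length hv) |>.not_gt (hql ▸ ha)
  exact hB.eq_penultimate_of_adj_end hp hav.symm
    (hB.mem_support_of_ne_mem_support_of_adj_of_isPath hp hq hav.symm hvq)

/-- Each edge is sent to its endpoint farther from a fixed root of its component; in a forest a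
vertex has at most one neighbour closer to the root, so this map is injective. -/
theorem IsAcyclic.ncard_edgeSet_le_ncard_support [Finite W] (hB : B.IsAcyclic) :
    B.edgeSet.ncard ≤ B.support.ncard := by
  classical
  let root : W → W := fun v => (B.connectedComponentMk v).out
  have hroot : ∀ v, B.Reachable (root v) v := fun v => ConnectedComponent.exact (Quot.out_eq _)
  have hroot_adj : ∀ {u v}, B.Adj u v → root u = root v := fun h => by
    simp only [root, ConnectedComponent.eq.mpr h.reachable]
  choose P hP using fun v => (hroot v).exists_isPath
  have hfar : ∀ e : B.edgeSet, ∃ v : B.support, ∃ a, B.Adj a v ∧ e.1 = s(a, v) ∧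
      B.dist (root v) a < B.dist (root v) v := by
    rintro ⟨⟨u, v⟩, he : B.Adj u v⟩
    rcases hB.dist_eq_dist_add_one_of_adj_of_reachable (root u) he (hroot u) with h | h
    · refine ⟨⟨u, v, he⟩, v, he.symm, Sym2.eq_swap, ?_⟩
      dsimp only
      omega
    · refine ⟨⟨v, u, he.symm⟩, u, he, rfl, ?_⟩
      dsimp only
      rw [← hroot_adj he]
      omega
  choose f a hadj hedge hlt using hfar
  have ha : ∀ e, a e = (P (f e)).penultimate := fun e =>
    hB.eq_penultimate_of_adj_of_dist_lt (hP _) (hadj e) (hlt e)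
  rw [← Nat.card_coe_set_eq, ← Nat.card_coe_set_eq]
  refine Nat.card_le_card_of_injective f fun e e' hee' => Subtype.ext ?_
  rw [hedge, hedge, ha, ha, hee']

end Forest

section Bubbles

variable {W : Type*}

theorem reachable_of_reachable_fromEdgeSet_map {H K : SimpleGraph W} (hHK : H ≤ K)
    {E : Set (Sym2 W)} (hE : E ⊆ K.edgeSet) {x y : W}
    (h : (fromEdgeSet (Sym2.map H.connectedComponentMk '' E)).Reachable
      (H.connectedComponentMk x) (H.connectedComponentMk y)) :
    K.Reachable x y := by
  suffices ∀ {c d}, (fromEdgeSet (Sym2.map H.connectedComponentMk '' E)).Reachable c d →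
      c.map (Hom.ofLE hHK) = d.map (Hom.ofLE hHK) by
    simpa [ConnectedComponent.map_mk] using this h
  intro c d hcd
  rw [reachable_iff_reflTransGen] at hcd
  induction hcd with
  | refl => rfl
  | tail _ hadj ih =>
    rw [ih]
    obtain ⟨⟨e, he, hemap⟩, -⟩ := (fromEdgeSet_adj _).mp hadj
    induction e with | h a b
    have hab : K.connectedComponentMk a = K.connectedComponentMk b :=
      ConnectedComponent.eq.mpr (hE he).reachable
    rw [Sym2.map_mk, Sym2.eq_iff] at hemap
    rcases hemap with ⟨rfl, rfl⟩ | ⟨rfl, rfl⟩ <;> simp [ConnectedComponent.map_mk, hab]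

variable {K : SimpleGraph W} {T : Set (Sym2 W)}

def bubbleGraph (K : SimpleGraph W) (T : Set (Sym2 W)) :
    SimpleGraph (K.deleteEdges T).ConnectedComponent :=
  fromEdgeSet (Sym2.map (K.deleteEdges T).connectedComponentMk '' T)

theorem not_reachable_fromEdgeSet_map_diff (hT : T ⊆ K.edgeSet) {x y : W}
    (hbr : K.IsBridge s(x, y)) (hxy : s(x, y) ∈ T) :
    ¬ (fromEdgeSet (Sym2.map (K.deleteEdges T).connectedComponentMk '' (T \ {s(x, y)}))).Reachable
      ((K.deleteEdges T).connectedComponentMk x) ((K.deleteEdges T).connectedComponentMk y) :=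
  fun h => isBridge_iff.mp hbr <| reachable_of_reachable_fromEdgeSet_map
    (deleteEdges_anti (Set.singleton_subset_iff.mpr hxy))
    (fun _ he => (edgeSet_deleteEdges _).symm ▸ ⟨hT he.1, he.2⟩) h

variable (hT : T ⊆ K.edgeSet) (hbr : ∀ e ∈ T, K.IsBridge e)
include hT hbr

theorem injOn_map_connectedComponentMk_deleteEdges :
    Set.InjOn (Sym2.map (K.deleteEdges T).connectedComponentMk) T := by
  rintro ⟨x, y⟩ hf g hg hfg
  by_contra hne
  refine not_reachable_fromEdgeSet_map_diff hT (hbr _ hf) hf ?_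
  have hmem : s((K.deleteEdges T).connectedComponentMk x, (K.deleteEdges T).connectedComponentMk y)
      ∈ Sym2.map (K.deleteEdges T).connectedComponentMk '' (T \ {s(x, y)}) :=
    ⟨g, ⟨hg, Ne.symm hne⟩, hfg.symm⟩
  by_cases h : (K.deleteEdges T).connectedComponentMk x = (K.deleteEdges T).connectedComponentMk y
  · rw [h]
  · exact ((fromEdgeSet_adj _).mpr ⟨hmem, h⟩).reachable

theorem not_isDiag_map_connectedComponentMk_deleteEdges {e : Sym2 W} (he : e ∈ T) :
    ¬ (Sym2.map (K.deleteEdges T).connectedComponentMk e).IsDiag := by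
  induction e with | h x y
  intro h
  refine not_reachable_fromEdgeSet_map_diff hT (hbr _ he) he ?_
  rw [Sym2.map_mk, Sym2.mk_isDiag_iff] at h
  rw [h]

theorem isAcyclic_bubbleGraph : (bubbleGraph K T).IsAcyclic := by
  refine isAcyclic_iff_forall_isBridge.mpr fun e he => ?_
  rw [bubbleGraph, edgeSet_fromEdgeSet] at he
  obtain ⟨⟨f, hf, rfl⟩, -⟩ := he
  induction f with | h x y
  rw [Sym2.map_mk, isBridge_iff]
  refine fun h => not_reachable_fromEdgeSet_map_diff hT (hbr _ hf) hf (h.mono fun c d hcd => ?_)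
  obtain ⟨hcd, hne⟩ := deleteEdges_adj.mp hcd
  obtain ⟨⟨g, hg, hgcd⟩, hcd⟩ := (fromEdgeSet_adj _).mp hcd
  refine (fromEdgeSet_adj _).mpr ⟨⟨g, ⟨hg, fun hgf => hne ?_⟩, hgcd⟩, hcd⟩
  rw [← hgcd, Set.mem_singleton_iff.mp hgf, Sym2.map_mk]
  rfl

theorem ncard_le_ncard_of_forall_isBridge [Finite W] :
    T.ncard ≤ {C | ∃ u, (K.deleteEdges T).connectedComponentMk u = C ∧ ∃ e ∈ T, u ∈ e}.ncard :=
  calc T.ncard = (Sym2.map (K.deleteEdges T).connectedComponentMk '' T).ncard :=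
        (injOn_map_connectedComponentMk_deleteEdges hT hbr).ncard_image.symm
    _ ≤ (bubbleGraph K T).edgeSet.ncard := by
        rw [bubbleGraph, edgeSet_fromEdgeSet]
        exact Set.ncard_le_ncard fun _ ⟨f, hf, hfe⟩ =>
          ⟨⟨f, hf, hfe⟩, hfe ▸ not_isDiag_map_connectedComponentMk_deleteEdges hT hbr hf⟩
    _ ≤ (bubbleGraph K T).support.ncard :=
        (isAcyclic_bubbleGraph hT hbr).ncard_edgeSet_le_ncard_support
    _ ≤ _ := Set.ncard_le_ncard fun c ⟨d, hcd⟩ => by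
        obtain ⟨⟨⟨a, b⟩, he, hab⟩, -⟩ := (fromEdgeSet_adj _).mp hcd
        rw [Sym2.map_mk, Sym2.eq_iff] at hab
        rcases hab with ⟨rfl, -⟩ | ⟨-, rfl⟩
        · exact ⟨a, rfl, _, he, Sym2.mem_mk_left a b⟩
        · exact ⟨b, rfl, _, he, Sym2.mem_mk_right a b⟩

end Bubbles

theorem isBridge_induce_of_forall_isCycle {V : Type*} {G : SimpleGraph V} {s : Set V}
    {e : Sym2 s} (he : e ∈ (G.induce s).edgeSet)
    (h : ∀ (v : V) (c : G.Walk v v), c.IsCycle → e.map Subtype.val ∈ c.edges →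
      ∃ z ∉ s, z ∈ c.support) :
    (G.induce s).IsBridge e := by
  refine (isBridge_iff_forall_cycle_notMem he).mpr fun u c hc hec => ?_
  obtain ⟨z, hz, hzc⟩ := h _ (c.map (Embedding.induce s).toHom) (hc.map Subtype.val_injective)
    (c.edges_map _ ▸ List.mem_map_of_mem hec)
  rw [Walk.support_map] at hzc
  obtain ⟨w, -, rfl⟩ := List.mem_map.mp hzc
  exact hz w.2

end SimpleGraph

theorem stmt18_general {V : Type} [Fintype V] (G : SimpleGraph V)
    (S : Set (Sym2 V)) (hS : S ⊆ G.edgeSet) (Z : Set V)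
    (hZdisj : ∀ z ∈ Z, ¬ ∃ e ∈ S, z ∈ e)
    (hZ : ∀ (v : V) (c : G.Walk v v), c.IsCycle → (∃ e ∈ c.edges, e ∈ S) →
      ∃ z ∈ Z, z ∈ c.support) :
    letI H := (G.deleteEdges S).induce {v : V | v ∉ Z}
    letI cc := H.connectedComponentMk
    S.ncard ≤
      {C : H.ConnectedComponent | ∃ u : {v : V // v ∉ Z}, cc u = C ∧ ∃ e ∈ S, u.1 ∈ e}.ncard := by
  let T : Set (Sym2 {v : V | v ∉ Z}) := Sym2.map Subtype.val ⁻¹' S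
  have hH : (G.deleteEdges S).induce {v | v ∉ Z} = (G.induce {v | v ∉ Z}).deleteEdges T := by
    ext
    simp [T]
  have hST : S ⊆ Set.range (Sym2.map ((↑) : {v | v ∉ Z} → V)) := by
    rintro ⟨a, b⟩ he
    exact ⟨s(⟨a, fun ha => hZdisj a ha ⟨_, he, Sym2.mem_mk_left a b⟩⟩,
      ⟨b, fun hb => hZdisj b hb ⟨_, he, Sym2.mem_mk_right a b⟩⟩), rfl⟩
  have hT : T ⊆ (G.induce {v | v ∉ Z}).edgeSet := by
    rintro ⟨a, b⟩ he
    exact hS he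
  have hbr : ∀ e ∈ T, (G.induce {v | v ∉ Z}).IsBridge e := fun e he =>
    SimpleGraph.isBridge_induce_of_forall_isCycle (hT he) fun v c hc hec =>
      let ⟨z, hz, hzc⟩ := hZ v c hc ⟨_, hec, he⟩
      ⟨z, not_not.mpr hz, hzc⟩
  rw [hH]
  calc S.ncard = T.ncard := (Set.ncard_preimage_of_injective_subset_range
        (Sym2.map.injective Subtype.val_injective) hST).symm
    _ ≤ _ := SimpleGraph.ncard_le_ncard_of_forall_isBridge hT hbr
    _ ≤ _ := Set.ncard_le_ncard <| by
        rintro C ⟨u, hu, e, he, hue⟩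
        exact ⟨u, hu, _, he, Sym2.mem_map.mpr ⟨u, hue, rfl⟩⟩

/-- If `Z` is disjoint from `V(S)` and `G - Z` has no `S`-cycle, then `|S|` is at most the
number of connected components of `G - Z - S` containing an endpoint of an `S`-edge
(the non-solitary bubbles). -/
theorem stmt18 {V : Type} [Fintype V] [DecidableEq V] (G : SimpleGraph V)
    (S : Set (Sym2 V)) (hS : S ⊆ G.edgeSet) (Z : Set V)
    (hZdisj : ∀ z ∈ Z, ¬ ∃ e ∈ S, z ∈ e)
    (hZ : ∀ (v : V) (c : G.Walk v v), c.IsCycle → (∃ e ∈ c.edges, e ∈ S) →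
      ∃ z ∈ Z, z ∈ c.support) :
    letI H := (G.deleteEdges S).induce {v : V | v ∉ Z}
    letI cc := H.connectedComponentMk
    S.ncard ≤
      {C : H.ConnectedComponent | ∃ u : {v : V // v ∉ Z}, cc u = C ∧ ∃ e ∈ S, u.1 ∈ e}.ncard :=
  stmt18_general G S hS Z hZdisj hZ
end
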